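/- arXiv:math/0004087 — 4 statements merged into one kernel-verified Lean document; each statement's English description precedes it below -/
import Mathlib

section
/- If the dual Banach space E* has the Dunford–Pettis property, then E has the Dunford–Pettis property. -/
open Filter Topology Metric

/-- A sequence in a normed space is weakly null. -/
def WeaklyNull {E : Type*} [NormedAddCommGroup E] [NormedSpace ℝ E] (x : ℕ → E) : Prop :=
  ∀ φ : E →L[ℝ] ℝ, Tendsto (fun n => φ (x n)) atTop (𝓝 0)

/-- A bounded linear operator is completely continuous: it maps weakly null
sequences to norm null sequences. -/
def CompletelyContinuous {E F : Type*} [NormedAddCommGroup E] [NormedSpace ℝ E]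
    [NormedAddCommGroup F] [NormedSpace ℝ F] (T : E →L[ℝ] F) : Prop :=
  ∀ x : ℕ → E, WeaklyNull x → Tendsto (fun n => ‖T (x n)‖) atTop (𝓝 0)

/-- A bounded linear operator is weakly compact: the image of the closed unit
ball is relatively compact in the weak topology of the codomain. -/
def WeaklyCompactOp {E F : Type*} [NormedAddCommGroup E] [NormedSpace ℝ E]
    [NormedAddCommGroup F] [NormedSpace ℝ F] (T : E →L[ℝ] F) : Prop :=
  IsCompact (closure (toWeakSpace ℝ F '' (T '' closedBall (0 : E) 1)))

/-- The Dunford–Pettis property: every weakly compact operator into any Banach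
space is completely continuous. -/
def DunfordPettis (E : Type) [NormedAddCommGroup E] [NormedSpace ℝ E] : Prop :=
  ∀ (F : Type) [NormedAddCommGroup F] [NormedSpace ℝ F] [CompleteSpace F],
    ∀ T : E →L[ℝ] F, WeaklyCompactOp T → CompletelyContinuous T

/-- The Schur property: weakly null sequences are norm null. -/
def SchurProperty (E : Type*) [NormedAddCommGroup E] [NormedSpace ℝ E] : Prop :=
  ∀ x : ℕ → E, WeaklyNull x → Tendsto (fun n => ‖x n‖) atTop (𝓝 0)

/-- A topological space is scattered: every nonempty closed subset has a point
isolated in that subset. -/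
def Scattered (X : Type*) [TopologicalSpace X] : Prop :=
  ∀ C : Set X, IsClosed C → C.Nonempty → ∃ x ∈ C, 𝓝[C \ {x}] x = ⊥

/-- `X`, together with the bounded bilinear map `tmul`, is (a realization of) the completed
projective tensor product `E ⊗̂ F`, characterized by the universal property for bounded
bilinear maps together with the cross-norm property. -/
structure IsProjectiveTensorProduct (E F X : Type) [NormedAddCommGroup E] [NormedSpace ℝ E]
    [NormedAddCommGroup F] [NormedSpace ℝ F] [NormedAddCommGroup X] [NormedSpace ℝ X]
    [CompleteSpace X] (tmul : E →L[ℝ] F →L[ℝ] X) : Prop where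
  norm_tmul : ∀ f g, ‖tmul f g‖ = ‖f‖ * ‖g‖
  lift : ∀ (G : Type) [NormedAddCommGroup G] [NormedSpace ℝ G] [CompleteSpace G]
    (B : E →L[ℝ] F →L[ℝ] G),
    ∃! T : X →L[ℝ] G, (∀ f g, T (tmul f g) = B f g) ∧ ‖T‖ = ‖B‖

/-- `X`, together with the symmetric bounded bilinear map `tmul`, is (a realization of) the
2-fold symmetric projective tensor product `E ⊗̂ₛ E`, characterized by the universal property
for bounded symmetric bilinear maps. -/
structure IsSymmetricProjectiveTensorProduct2 (E X : Type) [NormedAddCommGroup E]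
    [NormedSpace ℝ E] [NormedAddCommGroup X] [NormedSpace ℝ X] [CompleteSpace X]
    (tmul : E →L[ℝ] E →L[ℝ] X) : Prop where
  symm : ∀ f g, tmul f g = tmul g f
  lift : ∀ (G : Type) [NormedAddCommGroup G] [NormedSpace ℝ G] [CompleteSpace G]
    (B : E →L[ℝ] E →L[ℝ] G), (∀ f g, B f g = B g f) →
    ∃! T : X →L[ℝ] G, ∀ f g, T (tmul f g) = B f g

/-- `X`, together with the bounded multilinear map `tmul`, is (a realization of) the completed
projective tensor product `E 0 ⊗̂ ⋯ ⊗̂ E (n-1)`, characterized by the universal property for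
bounded multilinear maps. -/
structure IsMultiProjectiveTensorProduct {n : ℕ} (E : Fin n → Type)
    [∀ i, NormedAddCommGroup (E i)] [∀ i, NormedSpace ℝ (E i)] (X : Type)
    [NormedAddCommGroup X] [NormedSpace ℝ X] [CompleteSpace X]
    (tmul : ContinuousMultilinearMap ℝ E X) : Prop where
  lift : ∀ (G : Type) [NormedAddCommGroup G] [NormedSpace ℝ G] [CompleteSpace G]
    (B : ContinuousMultilinearMap ℝ E G), ∃! T : X →L[ℝ] G, ∀ m, T (tmul m) = B m

/-- `X`, together with the symmetric bounded `n`-linear map `tmul`, is (a realization of) the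
`n`-fold symmetric projective tensor product `⊗̂_{n,s} E`, characterized by the universal
property for bounded symmetric `n`-linear maps. -/
structure IsSymmetricProjectiveTensorProduct (n : ℕ) (E : Type) [NormedAddCommGroup E]
    [NormedSpace ℝ E] (X : Type) [NormedAddCommGroup X] [NormedSpace ℝ X] [CompleteSpace X]
    (tmul : ContinuousMultilinearMap ℝ (fun _ : Fin n => E) X) : Prop where
  symm : ∀ (σ : Equiv.Perm (Fin n)) m, tmul (fun i => m (σ i)) = tmul m
  lift : ∀ (G : Type) [NormedAddCommGroup G] [NormedSpace ℝ G] [CompleteSpace G]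
    (B : ContinuousMultilinearMap ℝ (fun _ : Fin n => E) G),
    (∀ (σ : Equiv.Perm (Fin n)) m, B (fun i => m (σ i)) = B m) →
    ∃! T : X →L[ℝ] G, ∀ m, T (tmul m) = B m

-- boundedness of weakly null sequences
lemma WeaklyNull.bounded {E : Type*} [NormedAddCommGroup E] [NormedSpace ℝ E]
    {x : ℕ → E} (hx : WeaklyNull x) : ∃ M : ℝ, 0 < M ∧ ∀ n, ‖x n‖ ≤ M := by
  obtain ⟨C, hC⟩ := banach_steinhaus
    (g := fun n => NormedSpace.inclusionInDoubleDual ℝ E (x n))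
    (fun φ => by
      have h1 : Tendsto (fun n => ‖φ (x n)‖) atTop (𝓝 ‖(0:ℝ)‖) := (hx φ).norm
      obtain ⟨C, hC⟩ := h1.bddAbove_range
      exact ⟨C, fun n => by
        simpa using hC (Set.mem_range_self n)⟩)
  refine ⟨max C 1, lt_of_lt_of_le one_pos (le_max_right _ _), fun n => ?_⟩
  have : ‖x n‖ = ‖NormedSpace.inclusionInDoubleDual ℝ E (x n)‖ :=
    ((NormedSpace.inclusionInDoubleDualLi ℝ (E := E)).norm_map (x n)).symm
  exact this.le.trans ((hC n).trans (le_max_left _ _))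

-- extraction from non-convergence
lemma exists_sub_of_not_tendsto {u : ℕ → ℝ} {a : ℝ} (h : ¬ Tendsto u atTop (𝓝 a)) :
    ∃ ε > 0, ∃ ι : ℕ → ℕ, StrictMono ι ∧ ∀ k, ε ≤ |u (ι k) - a| := by
  rw [Metric.tendsto_atTop] at h
  push_neg at h
  obtain ⟨ε, hε, hfreq⟩ := h
  obtain ⟨ι, hι, hP⟩ := Filter.extraction_of_frequently_atTop
    (P := fun n => ε ≤ |u n - a|)
    (frequently_atTop.2 fun N => by
      obtain ⟨n, hn, hn'⟩ := hfreq N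
      exact ⟨n, hn, by simpa [Real.dist_eq] using hn'⟩)
  exact ⟨ε, hε, ι, hι, hP⟩

-- sup of a functional over a ball bounds r * ‖g‖
lemma opNorm_mul_le_of_forall_le {E : Type*} [NormedAddCommGroup E] [NormedSpace ℝ E]
    (g : E →L[ℝ] ℝ) {r s : ℝ} (hr : 0 < r) (h : ∀ x : E, ‖x‖ ≤ r → g x ≤ s) :
    r * ‖g‖ ≤ s := by
  have h' : ∀ x : E, ‖x‖ ≤ r → ‖g x‖ ≤ s := by
    intro x hx
    rw [Real.norm_eq_abs, abs_le]
    refine ⟨?_, h x hx⟩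
    have := h (-x) (by simpa using hx)
    simp only [map_neg] at this
    linarith
  have hs : 0 ≤ s := by simpa using h' 0 (by simp [hr.le])
  have hb : ‖g‖ ≤ s / r := by
    refine ContinuousLinearMap.opNorm_le_bound g (div_nonneg hs hr.le) fun x => ?_
    rcases eq_or_ne x 0 with rfl | hx0
    · simp
    · have hxn : 0 < ‖x‖ := norm_pos_iff.2 hx0
      have := h' ((r / ‖x‖) • x) (by
        rw [norm_smul, Real.norm_eq_abs, abs_of_pos (div_pos hr hxn)]
        rw [div_mul_cancel₀ _ hxn.ne'] )
      rw [map_smul, smul_eq_mul, Real.norm_eq_abs, abs_mul,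
        abs_of_pos (div_pos hr hxn)] at this
      rw [div_mul_eq_mul_div, le_div_iff₀ hr]
      calc ‖g x‖ * r = r / ‖x‖ * |g x| * ‖x‖ := by
            rw [Real.norm_eq_abs]; field_simp
        _ ≤ s * ‖x‖ := by nlinarith [abs_nonneg (g x), hxn]
  calc r * ‖g‖ ≤ r * (s / r) := by nlinarith [norm_nonneg g]
    _ = s := by field_simp

-- WeakSpace of a normed real space is T2
lemma weakSpace_t2 (V : Type*) [NormedAddCommGroup V] [NormedSpace ℝ V] :
    T2Space (WeakSpace ℝ V) := by
  have hinj : Function.Injective ((topDualPairing ℝ V).flip) := by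
    intro v w hvw
    apply NormedSpace.eq_iff_forall_dual_eq (𝕜 := ℝ) |>.2
    intro g
    exact DFunLike.congr_fun hvw g
  exact (WeakBilin.isEmbedding hinj).t2Space

-- Helly's theorem
lemma helly_finset {E : Type*} [NormedAddCommGroup E] [NormedSpace ℝ E]
    (Φ : (E →L[ℝ] ℝ) →L[ℝ] ℝ) {ι : Type*} [Fintype ι] [DecidableEq ι]
    (φ : ι → (E →L[ℝ] ℝ)) {ε : ℝ} (hε : 0 < ε) :
    ∃ x : E, ‖x‖ ≤ ‖Φ‖ + ε ∧ ∀ i, |φ i x - Φ (φ i)| ≤ ε := by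
  classical
  set r : ℝ := ‖Φ‖ + ε / 2 with hr
  have hr0 : 0 < r := by positivity
  set u : E →L[ℝ] (ι → ℝ) := ContinuousLinearMap.pi φ with hu
  set c : ι → ℝ := fun i => Φ (φ i) with hc
  set B : Set E := closedBall (0 : E) r with hB
  have hmem : c ∈ closure (u '' B) := by
    by_contra hcmem
    have hconv : Convex ℝ (closure (u '' B)) :=
      ((convex_closedBall (0:E) r).linear_image u.toLinearMap).closure
    obtain ⟨f, s, hfb, hfc⟩ := geometric_hahn_banach_closed_point hconv isClosed_closure hcmem
    -- hfb : ∀ a ∈ closure(u '' B), f a < s; hfc : s < f c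
    set g : E →L[ℝ] ℝ := ∑ i, f ((Pi.single i 1 : ι → ℝ)) • φ i with hg
    have hgu : ∀ x : E, f (u x) = g x := by
      intro x
      have : u x = ∑ i, (φ i x) • (Pi.single i 1 : ι → ℝ) := by
        ext j
        simp [hu, ContinuousLinearMap.pi_apply, Finset.sum_apply, Pi.single_apply]
      rw [this, map_sum]
      simp [hg, ContinuousLinearMap.sum_apply, mul_comm]
    have hfc' : f c = Φ g := by
      have : c = fun i => Φ (φ i) := rfl
      have hc2 : f c = ∑ i, Φ (φ i) * f ((Pi.single i 1 : ι → ℝ)) := by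
        have : c = ∑ i, (Φ (φ i)) • (Pi.single i 1 : ι → ℝ) := by
          ext j; simp [hc, Finset.sum_apply, Pi.single_apply]
        rw [this, map_sum]; simp [mul_comm]
      rw [hc2, hg]
      simp [ContinuousLinearMap.sum_apply, mul_comm]
    have hsup : r * ‖g‖ ≤ s := by
      refine opNorm_mul_le_of_forall_le g hr0 fun x hx => ?_
      have h3 := hfb (u x) (subset_closure ⟨x, by simpa [hB] using hx, rfl⟩)
      rw [hgu] at h3
      exact h3.le
    have habs : |Φ g| ≤ ‖Φ‖ * ‖g‖ := by
      calc |Φ g| = ‖Φ g‖ := (Real.norm_eq_abs _).symm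
        _ ≤ ‖Φ‖ * ‖g‖ := Φ.le_opNorm g
    have h1 : s < Φ g := hfc' ▸ hfc
    have h4 : Φ g ≤ ‖Φ‖ * ‖g‖ := (abs_le.1 habs).2
    have h5 : r * ‖g‖ = ‖Φ‖ * ‖g‖ + ε / 2 * ‖g‖ := by rw [hr]; ring
    have h7 : (0:ℝ) ≤ ε / 2 * ‖g‖ := mul_nonneg (by linarith) (norm_nonneg g)
    rw [h5] at hsup
    linarith
  -- extract approximation
  obtain ⟨y, ⟨x, hxB, rfl⟩, hdist⟩ := Metric.mem_closure_iff.1 hmem (ε/2) (by positivity)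
  refine ⟨x, ?_, fun i => ?_⟩
  · have h6 := mem_closedBall_iff_norm.1 hxB
    simp only [sub_zero] at h6
    rw [hr] at h6
    linarith
  · have : dist (c i) ((u x) i) ≤ dist c (u x) := dist_le_pi_dist c (u x) i
    have h2 : dist (c i) ((u x) i) ≤ ε / 2 := this.trans hdist.le
    rw [Real.dist_eq] at h2
    have : (u x) i = φ i x := rfl
    calc |φ i x - Φ (φ i)| = |c i - (u x) i| := by rw [abs_sub_comm]; simp [hc, this]
      _ ≤ ε / 2 := h2
      _ ≤ ε := by linarith

lemma exists_rep {E F : Type*} [NormedAddCommGroup E] [NormedSpace ℝ E]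
    [NormedAddCommGroup F] [NormedSpace ℝ F] (T : E →L[ℝ] F) (hT : WeaklyCompactOp T)
    (Φ : (E →L[ℝ] ℝ) →L[ℝ] ℝ) :
    ∃ f : F, ∀ y : F →L[ℝ] ℝ, Φ (y.comp T) = y f := by
  classical
  haveI : T2Space (WeakSpace ℝ F) := weakSpace_t2 F
  haveI : ContinuousSMul ℝ (WeakSpace ℝ F) :=
    WeakBilin.instContinuousSMul ((topDualPairing ℝ F).flip)
  set r : ℝ := ‖Φ‖ + 1 with hr
  have hr0 : 0 < r := by positivity
  set K : Set (WeakSpace ℝ F) :=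
    closure (toWeakSpace ℝ F '' (T '' closedBall (0 : E) 1)) with hKdef
  have hK : IsCompact K := hT
  set K' : Set (WeakSpace ℝ F) := (fun w => r • w) '' K with hK'def
  have hK' : IsCompact K' := hK.image (continuous_const_smul r)
  set ev : (F →L[ℝ] ℝ) → WeakSpace ℝ F → ℝ := fun y w => (topDualPairing ℝ F).flip w y with hev
  have hevalC : ∀ y : F →L[ℝ] ℝ, Continuous (ev y) :=
    fun y => WeakBilin.eval_continuous ((topDualPairing ℝ F).flip) y
  set Z : Finset (F →L[ℝ] ℝ) × ℕ → Set (WeakSpace ℝ F) := fun p =>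
    K' ∩ ⋂ y ∈ p.1, {w | |ev y w - Φ (y.comp T)| ≤ 1 / (p.2 + 1)} with hZdef
  have hZmono : ∀ (p q : Finset (F →L[ℝ] ℝ) × ℕ), p.1 ⊆ q.1 → p.2 ≤ q.2 → Z q ⊆ Z p := by
    rintro p q h1 h2 w hw
    rw [hZdef] at hw ⊢
    simp only [Set.mem_inter_iff, Set.mem_iInter, Set.mem_setOf_eq] at hw ⊢
    refine ⟨hw.1, fun y hy => (hw.2 y (h1 hy)).trans ?_⟩
    apply one_div_le_one_div_of_le (by positivity)
    exact_mod_cast by omega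
  have hZclosed : ∀ p, IsClosed (Z p) := by
    intro p
    refine (hK'.isClosed).inter (isClosed_biInter fun y _ => ?_)
    have : {w : WeakSpace ℝ F | |ev y w - Φ (y.comp T)| ≤ 1 / (p.2 + 1)}
        = (fun w => |ev y w - Φ (y.comp T)|) ⁻¹' Set.Iic (1 / (p.2 + 1)) := rfl
    rw [this]
    exact IsClosed.preimage (((hevalC y).sub continuous_const).abs) isClosed_Iic
  have hZcompact : ∀ p, IsCompact (Z p) := fun p => hK'.inter_right
    (isClosed_biInter fun y _ =>
      IsClosed.preimage (((hevalC y).sub continuous_const).abs) isClosed_Iic)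
  have hZnonempty : ∀ p, (Z p).Nonempty := by
    rintro ⟨A, k⟩
    set ε : ℝ := min (1 / (k + 1 : ℝ)) 1 with hεdef
    have hε : 0 < ε := lt_min (by positivity) one_pos
    obtain ⟨x, hxnorm, hxapprox⟩ := helly_finset Φ (ι := {y // y ∈ A})
      (fun i => (i.1).comp T) hε
    have hxr : ‖x‖ ≤ r := by
      have : ε ≤ 1 := min_le_right _ _
      rw [hr]; linarith
    refine ⟨toWeakSpace ℝ F (T x), ?_, ?_⟩
    · -- membership in K'
      have hx1 : ‖r⁻¹ • x‖ ≤ 1 := by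
        rw [norm_smul, Real.norm_eq_abs, abs_of_pos (inv_pos.2 hr0)]
        rw [inv_mul_le_iff₀ hr0]; simpa using hxr
      have hmem : toWeakSpace ℝ F (T (r⁻¹ • x)) ∈ K :=
        subset_closure ⟨T (r⁻¹ • x), ⟨r⁻¹ • x, by simpa [dist_eq_norm] using hx1, rfl⟩, rfl⟩
      refine ⟨toWeakSpace ℝ F (T (r⁻¹ • x)), hmem, ?_⟩
      show r • ((toWeakSpace ℝ F) (T (r⁻¹ • x))) = (toWeakSpace ℝ F) (T x)
      rw [← map_smul, ← map_smul, smul_smul, mul_inv_cancel₀ hr0.ne', one_smul]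
    · -- membership in the intersection
      simp only [Set.mem_iInter, Set.mem_setOf_eq]
      intro y hy
      have h1 : ev y (toWeakSpace ℝ F (T x)) = (y.comp T) x := rfl
      rw [h1]
      have := hxapprox ⟨y, hy⟩
      refine this.trans (min_le_left _ _)
  obtain ⟨w, hw⟩ := IsCompact.nonempty_iInter_of_directed_nonempty_isCompact_isClosed Z
    (fun p q => ⟨(p.1 ∪ q.1, max p.2 q.2),
      hZmono p _ Finset.subset_union_left (le_max_left _ _),
      hZmono q _ Finset.subset_union_right (le_max_right _ _)⟩)
    hZnonempty hZcompact hZclosed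
  refine ⟨(toWeakSpace ℝ F).symm w, fun y => ?_⟩
  have hyk : ∀ k : ℕ, |y ((toWeakSpace ℝ F).symm w) - Φ (y.comp T)| ≤ 1 / (k + 1) := by
    intro k
    have hwk := Set.mem_iInter.1 hw ({y}, k)
    rw [hZdef] at hwk
    simp only [Set.mem_inter_iff, Set.mem_iInter, Set.mem_setOf_eq] at hwk
    exact hwk.2 y (Finset.mem_singleton_self y)
  have hzero : |y ((toWeakSpace ℝ F).symm w) - Φ (y.comp T)| ≤ 0 := by
    refine ge_of_tendsto' tendsto_one_div_add_atTop_nhds_zero_nat fun k => hyk k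
  exact (sub_eq_zero.1 (abs_nonpos_iff.1 hzero)).symm

-- cluster point of a convergent sequence equals the limit
lemma mapClusterPt_unique {Y : Type*} [TopologicalSpace Y] [T2Space Y] {v : ℕ → Y} {a b : Y}
    (h : MapClusterPt a atTop v) (hv : Tendsto v atTop (𝓝 b)) : a = b :=
  eq_of_nhds_neBot (h.clusterPt.neBot.mono (inf_le_inf_left _ hv))

-- cluster point lies in any closed set containing the sequence
lemma mapClusterPt_mem_closed {Y : Type*} [TopologicalSpace Y] {v : ℕ → Y} {a : Y} {A : Set Y}
    (h : MapClusterPt a atTop v) (hA : IsClosed A) (hv : ∀ k, v k ∈ A) : a ∈ A := by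
  have h1 : map v atTop ≤ 𝓟 A := le_principal_iff.2 (Filter.mem_map.2 (Filter.univ_mem' hv))
  have h2 : ClusterPt a (𝓟 A) := h.clusterPt.mono h1
  exact hA.closure_eq ▸ mem_closure_iff_clusterPt.2 h2

lemma weak_seq_extract {X : Type*} [NormedAddCommGroup X] [NormedSpace ℝ X]
    {W : Set (WeakSpace ℝ X)} (hW : IsCompact W) (φ : ℕ → X)
    (hφ : ∀ k, toWeakSpace ℝ X (φ k) ∈ W) :
    ∃ (ι : ℕ → ℕ) (ψ : X), StrictMono ι ∧
      ∀ Φ : X →L[ℝ] ℝ, Tendsto (fun k => Φ (φ (ι k))) atTop (𝓝 (Φ ψ)) := by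
  classical
  haveI : T2Space (WeakSpace ℝ X) := weakSpace_t2 X
  set J := toWeakSpace ℝ X with hJ
  set ev : (X →L[ℝ] ℝ) → WeakSpace ℝ X → ℝ := fun Φ w => (topDualPairing ℝ X).flip w Φ with hev
  have hevalC : ∀ Φ : X →L[ℝ] ℝ, Continuous (ev Φ) :=
    fun Φ => WeakBilin.eval_continuous ((topDualPairing ℝ X).flip) Φ
  have hevJ : ∀ (Φ : X →L[ℝ] ℝ) (v : X), ev Φ (J v) = Φ v := fun _ _ => rfl
  -- the separable closed subspace
  set X₀ : Submodule ℝ X := (Submodule.span ℝ (Set.range φ)).topologicalClosure with hX₀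
  have hX₀closed : IsClosed (X₀ : Set X) := Submodule.isClosed_topologicalClosure _
  have hX₀sep : TopologicalSpace.IsSeparable (X₀ : Set X) := by
    rw [hX₀, Submodule.topologicalClosure_coe]
    exact (TopologicalSpace.IsSeparable.span (Set.countable_range φ).isSeparable).closure
  have hφX₀ : ∀ k, φ k ∈ X₀ := fun k =>
    (Submodule.le_topologicalClosure _) (Submodule.subset_span (Set.mem_range_self k))
  -- S = weak image of X₀ is weakly closed
  set S : Set (WeakSpace ℝ X) := J '' (X₀ : Set X) with hS
  have hSclosed : IsClosed S := by
    have h1 := (X₀.convex).toWeakSpace_closure (𝕜 := ℝ)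
    rw [hX₀closed.closure_eq] at h1
    rw [hS, hJ, h1]
    exact isClosed_closure
  -- C is weakly compact and contains the sequence
  set C : Set (WeakSpace ℝ X) := W ∩ S with hC
  have hCcompact : IsCompact C := hW.inter_right hSclosed
  have hmemC : ∀ k, J (φ k) ∈ C := fun k => ⟨hφ k, ⟨φ k, hφX₀ k, rfl⟩⟩
  -- dense sequence in X₀
  have hX₀ne : (0 : X) ∈ (X₀ : Set X) := X₀.zero_mem
  obtain ⟨c, hccount, hcdense⟩ := hX₀sep
  have hcne : c.Nonempty := by
    rcases Set.eq_empty_or_nonempty c with rfl | h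
    · exfalso
      have := hcdense hX₀ne
      simpa using this
    · exact h
  obtain ⟨z, rfl⟩ := hccount.exists_eq_range hcne
  -- norming functionals
  have hf : ∀ j : ℕ, ∃ g : X →L[ℝ] ℝ, ‖g‖ ≤ 1 ∧ g (z j) = ‖z j‖ := by
    intro j
    rcases eq_or_ne (z j) 0 with h0 | h0
    · exact ⟨0, by simp, by simp [h0]⟩
    · obtain ⟨g, hg1, hg2⟩ := exists_dual_vector ℝ (z j) (norm_ne_zero_iff.2 h0)
      exact ⟨g, hg1.le, hg2⟩
  choose f hfnorm hfz using hf
  -- separation of points of X₀ by the f j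
  have hsep : ∀ u : X, u ∈ (X₀ : Set X) → (∀ j, f j u = 0) → u = 0 := by
    intro u hu hfu
    by_contra hu0
    have hun : 0 < ‖u‖ := norm_pos_iff.2 hu0
    obtain ⟨v, ⟨j, rfl⟩, hdist⟩ := Metric.mem_closure_iff.1 (hcdense hu) (‖u‖/3) (by linarith)
    have h1 : ‖z j‖ ≥ ‖u‖ - ‖u - z j‖ := by
      have := norm_sub_norm_le u (z j)
      linarith [this]
    have h2 : ‖u - z j‖ < ‖u‖ / 3 := by
      rw [dist_eq_norm] at hdist
      simpa [norm_sub_rev] using hdist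
    have h3 : f j (z j) ≤ f j u + ‖u - z j‖ := by
      have h4 : f j (z j) - f j u = f j (z j - u) := by rw [map_sub]
      have h5 : |f j (z j - u)| ≤ ‖z j - u‖ := by
        calc |f j (z j - u)| = ‖f j (z j - u)‖ := (Real.norm_eq_abs _).symm
          _ ≤ ‖f j‖ * ‖z j - u‖ := (f j).le_opNorm _
          _ ≤ 1 * ‖z j - u‖ := by
              have := norm_nonneg (z j - u)
              nlinarith [hfnorm j]
          _ = ‖z j - u‖ := one_mul _
      have := (abs_le.1 h5).2
      rw [← h4] at this
      rw [norm_sub_rev] at this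
      linarith
    rw [hfz j, hfu j] at h3
    linarith
  -- weak cluster point of the sequence
  have hmapB : Filter.map (fun k => J (φ k)) atTop ≤ 𝓟 C :=
    le_principal_iff.2 (Filter.mem_map.2 (Filter.univ_mem' hmemC))
  obtain ⟨ψw, hψwC, hψwcluster⟩ := hCcompact.exists_mapClusterPt (u := fun k => J (φ k)) hmapB
  set ψ₀ : X := (toWeakSpace ℝ X).symm ψw with hψ₀
  have hJψ₀ : J ψ₀ = ψw := by rw [hψ₀, hJ]; exact (toWeakSpace ℝ X).apply_symm_apply ψw
  -- diagonal extraction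
  set U : ℕ → Set (WeakSpace ℝ X) := fun k =>
    ⋂ j ∈ Finset.range (k+1), {w | |ev (f j) w - ev (f j) ψw| < 1/(k+1)} with hU
  have hUopen : ∀ k, IsOpen (U k) := by
    intro k
    refine isOpen_biInter_finset fun j _ => ?_
    have : {w : WeakSpace ℝ X | |ev (f j) w - ev (f j) ψw| < 1/(k+1)}
        = (fun w => |ev (f j) w - ev (f j) ψw|) ⁻¹' Set.Iio (1/(k+1)) := rfl
    rw [this]
    exact IsOpen.preimage (((hevalC (f j)).sub continuous_const).abs) isOpen_Iio
  have hψwU : ∀ k, ψw ∈ U k := by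
    intro k
    simp only [hU, Set.mem_iInter, Set.mem_setOf_eq]
    intro j _
    simp only [sub_self, abs_zero]
    positivity
  have hfreq : ∀ k N, ∃ m > N, J (φ m) ∈ U k := by
    intro k N
    have := (mapClusterPt_iff_frequently.1 hψwcluster) (U k) ((hUopen k).mem_nhds (hψwU k))
    exact frequently_atTop'.1 this N
  choose g hg1 hg2 using hfreq
  set ι : ℕ → ℕ := fun k => Nat.rec (g 0 0) (fun n prev => g (n+1) prev) k with hι
  have hιmono : StrictMono ι := strictMono_nat_of_lt_succ fun n => hg1 (n+1) (ι n)
  have hιU : ∀ k, J (φ (ι k)) ∈ U k := by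
    intro k
    cases k with
    | zero => exact hg2 0 0
    | succ n => exact hg2 (n+1) (ι n)
  -- convergence against each f j
  have hconv : ∀ j, Tendsto (fun k => f j (φ (ι k))) atTop (𝓝 (f j ψ₀)) := by
    intro j
    rw [Metric.tendsto_atTop]
    intro ε hε
    obtain ⟨K, hK⟩ := exists_nat_one_div_lt (K := ℝ) hε
    refine ⟨max j K, fun k hk => ?_⟩
    have hjk : j < k + 1 := by omega
    have := Set.mem_iInter.1 (hιU k)
    have h2 := Set.mem_iInter.1 (this j) (Finset.mem_range.2 hjk)
    simp only [Set.mem_setOf_eq] at h2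
    rw [hevJ (f j) (φ (ι k))] at h2
    have hevψ : ev (f j) ψw = f j ψ₀ := by rw [← hJψ₀, hevJ]
    rw [hevψ] at h2
    rw [Real.dist_eq]
    have hlt : 1/((k:ℝ)+1) ≤ 1/((K:ℝ)+1) := by
      apply one_div_le_one_div_of_le (by positivity)
      have : K ≤ k := le_of_max_le_right hk
      exact_mod_cast by omega
    linarith
  -- main claim
  refine ⟨ι, ψ₀, hιmono, fun Φ => ?_⟩
  by_contra hno
  obtain ⟨ε, hε, κ, hκmono, hκ⟩ := exists_sub_of_not_tendsto hno
  -- cluster point of the sub-subsequence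
  have hmapB' : Filter.map (fun k => J (φ (ι (κ k)))) atTop ≤ 𝓟 C :=
    le_principal_iff.2 (Filter.mem_map.2 (Filter.univ_mem' fun k => hmemC _))
  obtain ⟨ψw', hψw'C, hψw'cluster⟩ :=
    hCcompact.exists_mapClusterPt (u := fun k => J (φ (ι (κ k)))) hmapB'
  set ψ₀' : X := (toWeakSpace ℝ X).symm ψw' with hψ₀'
  have hJψ₀' : J ψ₀' = ψw' := (toWeakSpace ℝ X).apply_symm_apply ψw'
  -- evaluations agree on the f j
  have hagree : ∀ j, f j ψ₀' = f j ψ₀ := by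
    intro j
    have hcl : MapClusterPt (ev (f j) ψw') atTop ((ev (f j)) ∘ (fun k => J (φ (ι (κ k))))) :=
      hψw'cluster.continuousAt_comp (hevalC (f j)).continuousAt
    have hcl' : MapClusterPt (f j ψ₀') atTop (fun k => f j (φ (ι (κ k)))) := by
      have h1 : ev (f j) ψw' = f j ψ₀' := by rw [← hJψ₀', hevJ]
      have h2 : ((ev (f j)) ∘ (fun k => J (φ (ι (κ k))))) = fun k => f j (φ (ι (κ k))) := rfl
      rwa [h1, h2] at hcl
    have htend : Tendsto (fun k => f j (φ (ι (κ k)))) atTop (𝓝 (f j ψ₀)) :=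
      (hconv j).comp hκmono.tendsto_atTop
    exact mapClusterPt_unique hcl' htend
  -- hence the limits coincide
  have hψ₀'X₀ : ψ₀' ∈ (X₀ : Set X) := by
    obtain ⟨u', hu', hJu'⟩ := hψw'C.2
    have : ψ₀' = u' := by
      rw [hψ₀', ← hJu']
      exact (toWeakSpace ℝ X).symm_apply_apply u'
    rwa [this]
  have hψ₀X₀ : ψ₀ ∈ (X₀ : Set X) := by
    have hψwS : ψw ∈ S := hψwC.2
    obtain ⟨u', hu', hJu'⟩ := hψwS
    have : ψ₀ = u' := by
      rw [hψ₀, ← hJu']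
      exact (toWeakSpace ℝ X).symm_apply_apply u'
    rwa [this]
  have heq : ψ₀' = ψ₀ := by
    have hd : ψ₀' - ψ₀ = 0 := by
      refine hsep _ (X₀.sub_mem hψ₀'X₀ hψ₀X₀) fun j => ?_
      rw [map_sub, hagree j, sub_self]
    have := sub_eq_zero.1 hd
    exact this
  -- but Φ separates them
  have hclΦ : MapClusterPt (Φ ψ₀') atTop (fun k => Φ (φ (ι (κ k)))) := by
    have hcl : MapClusterPt (ev Φ ψw') atTop ((ev Φ) ∘ (fun k => J (φ (ι (κ k))))) :=
      hψw'cluster.continuousAt_comp (hevalC Φ).continuousAt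
    have h1 : ev Φ ψw' = Φ ψ₀' := by rw [← hJψ₀', hevJ]
    rwa [h1] at hcl
  have hmemA : Φ ψ₀' ∈ {t : ℝ | ε ≤ |t - Φ ψ₀|} := by
    refine mapClusterPt_mem_closed hclΦ ?_ fun k => hκ k
    have : {t : ℝ | ε ≤ |t - Φ ψ₀|} = (fun t => |t - Φ ψ₀|) ⁻¹' Set.Ici ε := rfl
    rw [this]
    exact IsClosed.preimage ((continuous_id.sub continuous_const).abs) isClosed_Ici
  rw [heq] at hmemA
  simp only [Set.mem_setOf_eq, sub_self, abs_zero] at hmemA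
  linarith

open scoped ZeroAtInfty

-- an element of c₀ from a null sequence
noncomputable def seqC0 (t : ℕ → ℝ) (ht : Tendsto t atTop (𝓝 0)) : C₀(ℕ, ℝ) :=
  ⟨⟨t, continuous_of_discreteTopology⟩, by rwa [cocompact_eq_atTop]⟩

@[simp] lemma seqC0_apply (t : ℕ → ℝ) (ht : Tendsto t atTop (𝓝 0)) (n : ℕ) :
    seqC0 t ht n = t n := rfl

lemma c0_norm_le (t : C₀(ℕ, ℝ)) {C : ℝ} (hC : 0 ≤ C) (h : ∀ n, |t n| ≤ C) : ‖t‖ ≤ C := by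
  rw [← ZeroAtInftyContinuousMap.norm_toBCF_eq_norm]
  exact BoundedContinuousFunction.norm_le hC |>.2 fun n => by
    simpa [Real.norm_eq_abs] using h n

lemma c0_coord_le (t : C₀(ℕ, ℝ)) (n : ℕ) : |t n| ≤ ‖t‖ := by
  rw [← ZeroAtInftyContinuousMap.norm_toBCF_eq_norm]
  simpa [Real.norm_eq_abs] using t.toBCF.norm_coe_le_norm n

-- basis vectors in c₀
noncomputable def eC0 (n : ℕ) : C₀(ℕ, ℝ) :=
  seqC0 (fun m => if m = n then 1 else 0) (by
    apply Filter.Tendsto.congr' (f₁ := fun _ => (0:ℝ))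
    · filter_upwards [Filter.eventually_gt_atTop n] with m hm
      rw [if_neg (by omega)]
    · exact tendsto_const_nhds)

lemma c0_sum_apply {ι : Type*} (s : Finset ι) (f : ι → C₀(ℕ, ℝ)) (m : ℕ) :
    (∑ i ∈ s, f i) m = ∑ i ∈ s, f i m := by
  classical
  induction s using Finset.induction with
  | empty => rfl
  | insert _ _ h ih => rw [Finset.sum_insert h, Finset.sum_insert h, ← ih]; rfl

-- the coefficients of a functional on c₀ are absolutely summable with the right bound,
-- and represent the functional
lemma c0_dual_rep (ℓ : C₀(ℕ, ℝ) →L[ℝ] ℝ) :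
    ∃ a : ℕ → ℝ, Summable (fun n => |a n|) ∧
      (∀ t : C₀(ℕ, ℝ), HasSum (fun n => a n * t n) (ℓ t)) := by
  classical
  set a : ℕ → ℝ := fun n => ℓ (eC0 n) with ha
  have hpartial : ∀ s : Finset ℕ, ∑ n ∈ s, |a n| ≤ ‖ℓ‖ := by
    intro s
    set σ : ℕ → ℝ := fun n => if 0 ≤ a n then 1 else -1 with hσ
    set t : C₀(ℕ, ℝ) := ∑ n ∈ s, σ n • eC0 n with ht
    have htcoord : ∀ m, t m = if m ∈ s then σ m else 0 := by
      intro m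
      rw [ht]
      rw [c0_sum_apply]
      have : ∀ n, (σ n • eC0 n) m = if m = n then σ n else 0 := by
        intro n
        show σ n * (if m = n then (1:ℝ) else 0) = _
        simp only [mul_ite, mul_one, mul_zero]
      rw [Finset.sum_congr rfl fun n _ => this n]
      rw [Finset.sum_ite_eq s m σ]
    have htnorm : ‖t‖ ≤ 1 := by
      refine c0_norm_le t zero_le_one fun m => ?_
      rw [htcoord m]
      by_cases hm : m ∈ s
      · rw [if_pos hm, hσ]
        show |if 0 ≤ a m then (1:ℝ) else -1| ≤ 1
        by_cases h0 : 0 ≤ a m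
        · rw [if_pos h0]; norm_num
        · rw [if_neg h0]; norm_num
      · rw [if_neg hm]; norm_num
    have hcalc : ℓ t = ∑ n ∈ s, |a n| := by
      rw [ht, map_sum]
      refine Finset.sum_congr rfl fun n _ => ?_
      rw [map_smul]
      simp only [smul_eq_mul, ← ha]
      rw [hσ]
      show (if 0 ≤ a n then (1:ℝ) else -1) * a n = |a n|
      by_cases h0 : 0 ≤ a n
      · rw [if_pos h0, one_mul, abs_of_nonneg h0]
      · rw [if_neg h0, neg_one_mul, abs_of_neg (not_le.1 h0)]
    calc ∑ n ∈ s, |a n| = ℓ t := hcalc.symm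
      _ ≤ |ℓ t| := le_abs_self _
      _ ≤ ‖ℓ‖ * ‖t‖ := by rw [← Real.norm_eq_abs]; exact ℓ.le_opNorm t
      _ ≤ ‖ℓ‖ := by nlinarith [norm_nonneg ℓ, norm_nonneg t]
  have hsummable : Summable (fun n => |a n|) := by
    apply summable_of_sum_range_le (c := ‖ℓ‖) (fun n => abs_nonneg _)
    intro n
    exact hpartial (Finset.range n)
  refine ⟨a, hsummable, fun t => ?_⟩
  -- summability of the series
  have hsum2 : Summable (fun n => a n * t n) := by
    refine Summable.of_norm (Summable.of_nonneg_of_le (fun n => norm_nonneg _) (fun n => ?_)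
      (hsummable.mul_right ‖t‖))
    rw [Real.norm_eq_abs, abs_mul]
    have := c0_coord_le t n
    nlinarith [abs_nonneg (a n), abs_nonneg (t n)]
  rw [hsum2.hasSum_iff_tendsto_nat]
  -- partial sums are ℓ of truncations
  have htrunc : ∀ N, ∑ n ∈ Finset.range N, a n * t n = ℓ (∑ n ∈ Finset.range N, t n • eC0 n) := by
    intro N
    rw [map_sum]
    refine Finset.sum_congr rfl fun n _ => ?_
    rw [map_smul]
    simp only [smul_eq_mul, ← ha]
    ring
  have hconv : Tendsto (fun N => (∑ n ∈ Finset.range N, t n • eC0 n)) atTop (𝓝 t) := by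
    rw [Metric.tendsto_atTop]
    intro ε hε
    have hzero : Tendsto (fun n => t n) atTop (𝓝 0) := by
      have := t.zero_at_infty'
      rwa [cocompact_eq_atTop] at this
    obtain ⟨N₀, hN₀⟩ := (Metric.tendsto_atTop.1 hzero) (ε/2) (by linarith)
    refine ⟨N₀, fun N hN => ?_⟩
    rw [dist_eq_norm]
    have hcoord : ∀ m, ((∑ n ∈ Finset.range N, t n • eC0 n) - t) m
        = if m ∈ Finset.range N then 0 else - t m := by
      intro m
      have h2 : ((∑ n ∈ Finset.range N, t n • eC0 n) - t) m
          = (∑ n ∈ Finset.range N, t n • eC0 n) m - t m := rfl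
      rw [h2, c0_sum_apply]
      have : ∀ n, (t n • eC0 n) m = if m = n then t n else 0 := by
        intro n
        show t n * (if m = n then (1:ℝ) else 0) = _
        simp only [mul_ite, mul_one, mul_zero]
      rw [Finset.sum_congr rfl fun n _ => this n]
      rw [Finset.sum_ite_eq (Finset.range N) m (fun n => t n)]
      split <;> simp
    have : ‖(∑ n ∈ Finset.range N, t n • eC0 n) - t‖ ≤ ε/2 := by
      refine c0_norm_le _ (by linarith) fun m => ?_
      rw [hcoord m]
      split
      · simp; linarith
      · rename_i hm
        simp only [abs_neg]
        have hmN : N ≤ m := by simpa using hm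
        have := hN₀ m (le_trans hN hmN)
        rw [Real.dist_eq, sub_zero] at this
        exact this.le
    linarith
  have := (ℓ.continuous.tendsto t).comp hconv
  refine Tendsto.congr (fun N => (htrunc N).symm) this

set_option maxHeartbeats 1000000 in
lemma c0_tail_bound {a : ℕ → ℝ} (hsum : Summable fun n => |a n|)
    {ℓ : C₀(ℕ, ℝ) →L[ℝ] ℝ} (hrep : ∀ t : C₀(ℕ, ℝ), HasSum (fun n => a n * t n) (ℓ t))
    (t : C₀(ℕ, ℝ)) (N : ℕ) :
    |ℓ t - ∑ n ∈ Finset.range N, a n * t n| ≤ ‖t‖ * ∑' n, |a (n + N)| := by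
  set g : ℕ → ℝ := fun n => a (n + N) * t (n + N) with hg
  have h0 : HasSum (fun n => a n * t n) ((ℓ t - ∑ n ∈ Finset.range N, a n * t n)
      + ∑ n ∈ Finset.range N, a n * t n) := by
    rw [sub_add_cancel]; exact hrep t
  have h1 : HasSum g (ℓ t - ∑ n ∈ Finset.range N, a n * t n) := (hasSum_nat_add_iff N).2 h0
  have hsumtail : Summable (fun n => |a (n + N)|) := (summable_nat_add_iff N).2 hsum
  have hgle : ∀ n, ‖g n‖ ≤ |a (n + N)| * ‖t‖ := by
    intro n
    rw [hg, Real.norm_eq_abs, abs_mul]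
    have := c0_coord_le t (n + N)
    nlinarith [abs_nonneg (a (n + N)), abs_nonneg (t (n + N))]
  have hsum2 : Summable (fun n => ‖g n‖) :=
    Summable.of_nonneg_of_le (fun n => norm_nonneg _) hgle (hsumtail.mul_right ‖t‖)
  calc |ℓ t - ∑ n ∈ Finset.range N, a n * t n| = ‖∑' n, g n‖ := by
        rw [h1.tsum_eq, Real.norm_eq_abs]
    _ ≤ ∑' n, ‖g n‖ := norm_tsum_le_tsum_norm hsum2
    _ ≤ ∑' n, |a (n + N)| * ‖t‖ := Summable.tsum_le_tsum hgle hsum2 (hsumtail.mul_right ‖t‖)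
    _ = ‖t‖ * ∑' n, |a (n + N)| := by rw [tsum_mul_right]; ring

noncomputable def opS {E : Type*} [NormedAddCommGroup E] [NormedSpace ℝ E]
    (x : ℕ → E) (hx : WeaklyNull x) (M : ℝ) (hM : ∀ n, ‖x n‖ ≤ M) (hM0 : 0 ≤ M) :
    (E →L[ℝ] ℝ) →L[ℝ] C₀(ℕ, ℝ) :=
  LinearMap.mkContinuous
    { toFun := fun φ => seqC0 (fun n => φ (x n)) (hx φ)
      map_add' := fun φ ψ => by ext n; rfl
      map_smul' := fun c φ => by ext n; rfl }
    M (fun φ => by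
      refine c0_norm_le _ (mul_nonneg hM0 (norm_nonneg φ)) fun n => ?_
      calc |(seqC0 (fun n => φ (x n)) (hx φ)) n| = ‖φ (x n)‖ := by
            rw [Real.norm_eq_abs]; rfl
        _ ≤ ‖φ‖ * ‖x n‖ := φ.le_opNorm _
        _ ≤ M * ‖φ‖ := by nlinarith [norm_nonneg φ, hM n, norm_nonneg (x n)])

@[simp] lemma opS_apply {E : Type*} [NormedAddCommGroup E] [NormedSpace ℝ E]
    (x : ℕ → E) (hx : WeaklyNull x) (M : ℝ) (hM : ∀ n, ‖x n‖ ≤ M) (hM0 : 0 ≤ M)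
    (φ : E →L[ℝ] ℝ) (n : ℕ) : opS x hx M hM hM0 φ n = φ (x n) := rfl

lemma opS_norm_le {E : Type*} [NormedAddCommGroup E] [NormedSpace ℝ E]
    (x : ℕ → E) (hx : WeaklyNull x) (M : ℝ) (hM : ∀ n, ‖x n‖ ≤ M) (hM0 : 0 ≤ M)
    (φ : E →L[ℝ] ℝ) : ‖opS x hx M hM hM0 φ‖ ≤ M * ‖φ‖ := by
  refine c0_norm_le _ (mul_nonneg hM0 (norm_nonneg φ)) fun n => ?_
  calc |(opS x hx M hM hM0 φ) n| = ‖φ (x n)‖ := by rw [Real.norm_eq_abs]; rfl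
    _ ≤ ‖φ‖ * ‖x n‖ := φ.le_opNorm _
    _ ≤ M * ‖φ‖ := by nlinarith [norm_nonneg φ, hM n, norm_nonneg (x n)]

set_option maxHeartbeats 1600000 in
lemma opS_weaklyCompact {E : Type*} [NormedAddCommGroup E] [NormedSpace ℝ E]
    (x : ℕ → E) (hx : WeaklyNull x) (M : ℝ) (hM : ∀ n, ‖x n‖ ≤ M) (hM0 : 0 ≤ M) :
    WeaklyCompactOp (opS x hx M hM hM0) := by
  classical
  haveI : T2Space (WeakSpace ℝ (C₀(ℕ, ℝ))) := weakSpace_t2 _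
  set S := opS x hx M hM hM0 with hSdef
  set Bs : Set (WeakDual ℝ E) := WeakDual.toStrongDual ⁻¹' closedBall (0 : StrongDual ℝ E) 1 with hBs
  have hBscompact : IsCompact Bs := WeakDual.isCompact_closedBall (𝕜 := ℝ) (E := E) 0 1
  set Θ : WeakDual ℝ E → WeakSpace ℝ (C₀(ℕ, ℝ)) :=
    fun ψ => toWeakSpace ℝ (C₀(ℕ, ℝ)) (S (WeakDual.toStrongDual ψ)) with hΘ
  have hΘcont : ContinuousOn Θ Bs := by
    rw [continuousOn_iff_continuous_restrict]
    apply WeakBilin.continuous_of_continuous_eval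
    intro ℓ
    show Continuous fun ψ : Bs => ℓ (S (WeakDual.toStrongDual ψ.1))
    obtain ⟨a, hasum, harep⟩ := c0_dual_rep ℓ
    have htail : Tendsto (fun N => ∑' n, |a (n + N)|) atTop (𝓝 0) :=
      tendsto_sum_nat_add (fun n => |a n|)
    have key : TendstoUniformly
        (fun (N : ℕ) (ψ : Bs) => ∑ n ∈ Finset.range N, a n * (ψ.1 (x n)))
        (fun ψ : Bs => ℓ (S (WeakDual.toStrongDual ψ.1))) atTop := by
      rw [Metric.tendstoUniformly_iff]
      intro ε hε
      have hev : ∀ᶠ N in atTop, ∑' n, |a (n + N)| < ε / (M + 1) :=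
        htail.eventually (gt_mem_nhds (by positivity))
      filter_upwards [hev] with N hN ψ
      rw [Real.dist_eq]
      have hb := c0_tail_bound hasum harep (S (WeakDual.toStrongDual ψ.1)) N
      have hcoord : ∀ n, (S (WeakDual.toStrongDual ψ.1)) n = ψ.1 (x n) := fun n => rfl
      simp only [hcoord] at hb
      have hψ1 : ‖(WeakDual.toStrongDual ψ.1)‖ ≤ 1 := by
        have h9 := ψ.2
        simp only [hBs, Set.mem_preimage, Metric.mem_closedBall, dist_zero_right] at h9
        exact h9
      have hSnorm : ‖S (WeakDual.toStrongDual ψ.1)‖ ≤ M := by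
        calc ‖S (WeakDual.toStrongDual ψ.1)‖ ≤ M * ‖(WeakDual.toStrongDual ψ.1)‖ :=
              opS_norm_le x hx M hM hM0 _
          _ ≤ M := by nlinarith [norm_nonneg (WeakDual.toStrongDual ψ.1)]
      have htail0 : (0:ℝ) ≤ ∑' n, |a (n + N)| := tsum_nonneg fun n => abs_nonneg _
      have h2 : ‖S (WeakDual.toStrongDual ψ.1)‖ * (∑' n, |a (n + N)|)
          ≤ M * (∑' n, |a (n + N)|) := mul_le_mul_of_nonneg_right hSnorm htail0
      have h3 : M * (∑' n, |a (n + N)|) < ε := by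
        have h4 : M * (∑' n, |a (n + N)|) ≤ M * (ε / (M + 1)) :=
          mul_le_mul_of_nonneg_left hN.le hM0
        have h5 : M * (ε / (M + 1)) < ε := by
          rw [mul_div_assoc']
          rw [div_lt_iff₀ (by positivity)]
          nlinarith
        linarith
      linarith
    refine key.continuous (Filter.Eventually.of_forall fun N => ?_).frequently
    refine continuous_finset_sum _ fun n _ => Continuous.mul continuous_const ?_
    exact (WeakBilin.eval_continuous (topDualPairing ℝ E) (x n)).comp continuous_subtype_val
  have himg : toWeakSpace ℝ (C₀(ℕ, ℝ)) '' (S '' closedBall (0 : E →L[ℝ] ℝ) 1) = Θ '' Bs := by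
    ext w
    constructor
    · rintro ⟨v, ⟨φ, hφ, rfl⟩, rfl⟩
      exact ⟨StrongDual.toWeakDual φ, hφ, rfl⟩
    · rintro ⟨ψ, hψ, rfl⟩
      exact ⟨S (WeakDual.toStrongDual ψ), ⟨WeakDual.toStrongDual ψ, hψ, rfl⟩, rfl⟩
  have hcompact : IsCompact (Θ '' Bs) := hBscompact.image_of_continuousOn hΘcont
  show IsCompact (closure (toWeakSpace ℝ (C₀(ℕ, ℝ)) '' (S '' closedBall (0 : E →L[ℝ] ℝ) 1)))
  rw [himg, hcompact.isClosed.closure_eq]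
  exact hcompact

/-- If the dual has the Dunford–Pettis property, then so does the space. -/
theorem dunfordPettis_of_dual (E : Type) [NormedAddCommGroup E] [NormedSpace ℝ E]
    [CompleteSpace E] (h : DunfordPettis (E →L[ℝ] ℝ)) : DunfordPettis E := by
  intro F _ _ _ T hT x hx
  by_contra hno
  obtain ⟨ε, hε, ι₀, hι₀, hbig⟩ := exists_sub_of_not_tendsto hno
  have hbig' : ∀ k, ε ≤ ‖T (x (ι₀ k))‖ := by
    intro k
    have := hbig k
    rwa [sub_zero, abs_of_nonneg (norm_nonneg _)] at this
  -- pass to the subsequence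
  set x' : ℕ → E := fun k => x (ι₀ k) with hx'def
  have hx' : WeaklyNull x' := fun φ => (hx φ).comp hι₀.tendsto_atTop
  obtain ⟨M, hM0, hM⟩ := hx'.bounded
  -- norming functionals
  have hy : ∀ k, ∃ y : F →L[ℝ] ℝ, ‖y‖ = 1 ∧ y (T (x' k)) = ‖T (x' k)‖ := by
    intro k
    refine exists_dual_vector ℝ (T (x' k)) ?_
    intro h0
    have h9 := hbig' k
    rw [h0] at h9
    linarith
  choose y hynorm hyval using hy
  -- the sequence T* y k = y k ∘ T lies in a weakly compact set
  set φs : ℕ → (E →L[ℝ] ℝ) := fun k => (y k).comp T with hφs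
  set gmap : WeakDual ℝ F → WeakSpace ℝ (E →L[ℝ] ℝ) :=
    fun ψ => toWeakSpace ℝ (E →L[ℝ] ℝ) ((WeakDual.toStrongDual ψ).comp T) with hgmap
  have hgcont : Continuous gmap := by
    apply WeakBilin.continuous_of_continuous_eval
    intro Φ
    obtain ⟨f, hf⟩ := exists_rep T hT Φ
    have : (fun ψ : WeakDual ℝ F => (topDualPairing ℝ (E →L[ℝ] ℝ)).flip (gmap ψ) Φ)
        = fun ψ : WeakDual ℝ F => (topDualPairing ℝ F) ψ f := by
      funext ψ
      exact hf (WeakDual.toStrongDual ψ)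
    rw [this]
    exact WeakBilin.eval_continuous (topDualPairing ℝ F) f
  set Bs : Set (WeakDual ℝ F) := WeakDual.toStrongDual ⁻¹' closedBall (0 : StrongDual ℝ F) 1
    with hBs
  have hW : IsCompact (gmap '' Bs) :=
    (WeakDual.isCompact_closedBall (𝕜 := ℝ) (E := F) 0 1).image hgcont
  have hφsW : ∀ k, toWeakSpace ℝ (E →L[ℝ] ℝ) (φs k) ∈ gmap '' Bs := by
    intro k
    refine ⟨StrongDual.toWeakDual (y k), ?_, rfl⟩
    simp only [hBs, Set.mem_preimage, Metric.mem_closedBall, dist_zero_right]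
    rw [show ‖WeakDual.toStrongDual (StrongDual.toWeakDual (y k))‖ = ‖y k‖ from rfl]
    rw [hynorm k]
  -- extract a weakly convergent subsequence
  obtain ⟨ι, ψlim, hιmono, hconv⟩ := weak_seq_extract hW φs hφsW
  -- the weakly null sequence in E*
  set ψs : ℕ → (E →L[ℝ] ℝ) := fun k => φs (ι k) - ψlim with hψs
  have hψsnull : WeaklyNull ψs := by
    intro Φ
    have : (fun k => Φ (ψs k)) = fun k => Φ (φs (ι k)) - Φ ψlim := by
      funext k; rw [hψs]; simp
    rw [this]
    have := (hconv Φ).sub (tendsto_const_nhds (x := Φ ψlim))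
    simpa using this
  -- the operator S into c₀
  set S := opS x' hx' M hM hM0.le with hS
  have hScc : CompletelyContinuous S := h (C₀(ℕ, ℝ)) S (opS_weaklyCompact x' hx' M hM hM0.le)
  have hlim := hScc ψs hψsnull
  -- but ‖S (ψs k)‖ stays large
  have hψlim0 : Tendsto (fun k => ψlim (x' (ι k))) atTop (𝓝 0) :=
    (hx' ψlim).comp hιmono.tendsto_atTop
  have hlower : ∀ k, ε - |ψlim (x' (ι k))| ≤ ‖S (ψs k)‖ := by
    intro k
    have h1 : |(S (ψs k)) (ι k)| ≤ ‖S (ψs k)‖ := c0_coord_le _ _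
    have h2 : (S (ψs k)) (ι k) = (ψs k) (x' (ι k)) := rfl
    have h3 : (ψs k) (x' (ι k)) = (φs (ι k)) (x' (ι k)) - ψlim (x' (ι k)) := by
      rw [hψs]; simp
    have h4 : (φs (ι k)) (x' (ι k)) = ‖T (x' (ι k))‖ := by
      rw [hφs]
      exact hyval (ι k)
    have h5 : ε ≤ (φs (ι k)) (x' (ι k)) := by rw [h4]; exact hbig' (ι k)
    have h6 : ε - |ψlim (x' (ι k))| ≤ |(ψs k) (x' (ι k))| := by
      rw [h3]
      have := abs_sub_abs_le_abs_sub ((φs (ι k)) (x' (ι k))) (ψlim (x' (ι k)))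
      have h7 : ε ≤ |(φs (ι k)) (x' (ι k))| := h5.trans (le_abs_self _)
      calc ε - |ψlim (x' (ι k))| ≤ |(φs (ι k)) (x' (ι k))| - |ψlim (x' (ι k))| := by linarith
        _ ≤ |(φs (ι k)) (x' (ι k)) - ψlim (x' (ι k))| := abs_sub_abs_le_abs_sub _ _
    rw [← h2] at h6
    exact h6.trans h1
  -- contradiction
  have habs0 : Tendsto (fun k => |ψlim (x' (ι k))|) atTop (𝓝 0) := by
    simpa using hψlim0.abs
  have hεhalf : ∀ᶠ k in atTop, |ψlim (x' (ι k))| < ε / 2 :=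
    habs0.eventually (gt_mem_nhds (by linarith : (0:ℝ) < ε / 2))
  have hbigS : ∀ᶠ k in atTop, ε / 2 ≤ ‖S (ψs k)‖ := by
    filter_upwards [hεhalf] with k hk
    have := hlower k
    linarith
  have hsmallS : ∀ᶠ k in atTop, ‖S (ψs k)‖ < ε / 2 := by
    have := hlim.eventually (gt_mem_nhds (by linarith : (0:ℝ) < ε / 2))
    simpa using this
  obtain ⟨k, h1, h2⟩ := (hbigS.and hsmallS).exists
  linarith
end

section
/- If K is an infinite compact Hausdorff space, then C(K) does not have the Schur property; in particular there exist a sequence (fₙ) in the unit ball of C(K) and a sequence (ξₙ) in the unit ball of C(K)* such that (fₙ) is weakly null and ξₙ(fₙ) = 1 for all n. -/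
open Filter Topology Metric

/-!
An infinite Hausdorff space contains pairwise disjoint nonempty open sets `Uₙ`; Urysohn bumps
`fₙ` supported in `Uₙ` with `fₙ(xₙ) = 1` satisfy `‖∑ cᵢ fᵢ‖ ≤ 1` for all coefficients
`|cᵢ| ≤ 1`. Testing a functional `φ` against the signs of `φ(fᵢ)` gives `∑ |φ(fᵢ)| ≤ ‖φ‖`, so
`(fₙ)` is weakly null, while the point evaluations `δ_{xₙ}` keep `‖fₙ‖ = 1`.
-/

lemma weaklyNull_of_norm_sum_smul_le {E : Type*} [NormedAddCommGroup E] [NormedSpace ℝ E]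
    {x : ℕ → E} (C : ℝ)
    (h : ∀ (N : ℕ) (c : ℕ → ℝ), (∀ i, |c i| ≤ 1) → ‖∑ i ∈ Finset.range N, c i • x i‖ ≤ C) :
    WeaklyNull x := by
  intro φ
  have hsum : Summable fun n => |φ (x n)| := by
    refine summable_of_sum_range_le (c := ‖φ‖ * C) (fun n => abs_nonneg _) fun N => ?_
    set c : ℕ → ℝ := fun i => SignType.sign (φ (x i))
    have hc : ∀ i, |c i| ≤ 1 := fun i => by
      rcases lt_trichotomy (φ (x i)) 0 with hi | hi | hi <;> simp [c, hi]
    calc ∑ i ∈ Finset.range N, |φ (x i)| = φ (∑ i ∈ Finset.range N, c i • x i) := by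
          simp [c, map_sum]
      _ ≤ ‖φ‖ * ‖∑ i ∈ Finset.range N, c i • x i‖ := (le_abs_self _).trans (φ.le_opNorm _)
      _ ≤ ‖φ‖ * C := by gcongr; exact h N c hc
  exact tendsto_zero_iff_norm_tendsto_zero.mpr (by simpa using hsum.tendsto_atTop_zero)

lemma not_schurProperty_of_weaklyNull {E : Type*} [NormedAddCommGroup E] [NormedSpace ℝ E]
    {x : ℕ → E} (hx : WeaklyNull x) (ξ : ℕ → E →L[ℝ] ℝ) (hξ : ∀ n, ‖ξ n‖ ≤ 1)
    (hξx : ∀ n, ξ n (x n) = 1) : ¬ SchurProperty E := by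
  intro hschur
  have hnorm : ∀ n, 1 ≤ ‖x n‖ := fun n =>
    calc (1 : ℝ) = ξ n (x n) := (hξx n).symm
      _ ≤ ‖ξ n‖ * ‖x n‖ := (le_abs_self _).trans ((ξ n).le_opNorm _)
      _ ≤ ‖x n‖ := mul_le_of_le_one_left (norm_nonneg _) (hξ n)
  have : (1 : ℝ) ≤ 0 := ge_of_tendsto (hschur x hx) (Eventually.of_forall hnorm)
  norm_num at this

namespace ContinuousMap

variable {X : Type*} [TopologicalSpace X] [CompactSpace X]

lemma norm_evalCLM_le_one (x : X) : ‖(evalCLM ℝ x : C(X, ℝ) →L[ℝ] ℝ)‖ ≤ 1 :=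
  ContinuousLinearMap.opNorm_le_bound _ zero_le_one fun g => by
    simpa using g.norm_coe_le_norm x

lemma exists_apply_eq_one_norm_le_one_support_subset [T2Space X] {U : Set X} {x : X}
    (hU : IsOpen U) (hx : x ∈ U) :
    ∃ f : C(X, ℝ), f x = 1 ∧ ‖f‖ ≤ 1 ∧ Function.support f ⊆ U := by
  obtain ⟨f, hf0, hf1, hf01⟩ := exists_continuous_zero_one_of_isClosed hU.isClosed_compl
    isClosed_singleton (Set.disjoint_singleton_right.2 (not_not.2 hx))
  refine ⟨f, hf1 rfl, (norm_le _ zero_le_one).2 fun y => ?_, fun y hy => ?_⟩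
  · rw [Real.norm_eq_abs, abs_le]
    exact ⟨by linarith [(hf01 y).1], (hf01 y).2⟩
  · by_contra hyU
    exact hy (hf0 hyU)

lemma norm_sum_smul_le_one_of_pairwise_disjoint_support {f : ℕ → C(X, ℝ)}
    (hf : ∀ n, ‖f n‖ ≤ 1)
    (hdisj : Pairwise (Function.onFun Disjoint fun n => Function.support (f n)))
    (s : Finset ℕ) {c : ℕ → ℝ} (hc : ∀ i, |c i| ≤ 1) : ‖∑ i ∈ s, c i • f i‖ ≤ 1 := by
  refine (norm_le _ zero_le_one).2 fun y => ?_
  simp only [coe_sum, coe_smul, Finset.sum_apply, Pi.smul_apply, smul_eq_mul, Real.norm_eq_abs]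
  by_cases hy : ∃ m ∈ s, f m y ≠ 0
  · obtain ⟨m, hm, hmy⟩ := hy
    have honly : ∀ j ≠ m, f j y = 0 := fun j hjm =>
      Function.notMem_support.1 fun hjy => (hdisj hjm).ne_of_mem hjy hmy rfl
    rw [Finset.sum_eq_single_of_mem m hm fun j _ hjm => by rw [honly j hjm, mul_zero], abs_mul]
    have hfy : |f m y| ≤ 1 := by simpa using (f m).norm_coe_le_norm y |>.trans (hf m)
    exact mul_le_one₀ (hc m) (abs_nonneg _) hfy
  · push Not at hy
    rw [Finset.sum_eq_zero fun i hi => by rw [hy i hi, mul_zero], abs_zero]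
    exact zero_le_one

end ContinuousMap

/-- for infinite compact Hausdorff `K`, `C(K)` is not Schur; in particular
there are a weakly null sequence in the unit ball of `C(K)` and a sequence in the unit ball
of `C(K)*` with `ξₙ(fₙ) = 1` for all `n`. -/
theorem not_schur_continuousMap (K : Type) [TopologicalSpace K] [CompactSpace K] [T2Space K]
    [Infinite K] :
    ¬ SchurProperty C(K, ℝ) ∧
      ∃ (f : ℕ → C(K, ℝ)) (ξ : ℕ → (C(K, ℝ) →L[ℝ] ℝ)),
        (∀ n, ‖f n‖ ≤ 1) ∧ (∀ n, ‖ξ n‖ ≤ 1) ∧ WeaklyNull f ∧ ∀ n, ξ n (f n) = 1 := by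
  obtain ⟨U, hUinf, hUo, hUdisj⟩ := exists_seq_infinite_isOpen_pairwise_disjoint K
  choose x hx using fun n => (hUinf n).nonempty
  choose f hfx hfnorm hfU using fun n =>
    ContinuousMap.exists_apply_eq_one_norm_le_one_support_subset (hUo n) (hx n)
  let ξ n : C(K, ℝ) →L[ℝ] ℝ := ContinuousMap.evalCLM ℝ (x n)
  have hξ : ∀ n, ‖ξ n‖ ≤ 1 := fun n => ContinuousMap.norm_evalCLM_le_one (x n)
  have hweak : WeaklyNull f := weaklyNull_of_norm_sum_smul_le 1 fun N _ hc =>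
    ContinuousMap.norm_sum_smul_le_one_of_pairwise_disjoint_support hfnorm
      (fun _ _ hmn => (hUdisj hmn).mono (hfU _) (hfU _)) _ hc
  exact ⟨not_schurProperty_of_weaklyNull hweak ξ hξ hfx, f, ξ, hfnorm, hξ, hweak, hfx⟩
end

section
/- If a compact Hausdorff space K is not scattered, then C(K) contains an isomorphic copy of ℓ¹, and consequently there exists a continuous surjective linear operator q : C(K) → ℓ². -/
open Filter Topology Metric

namespace CKl1l2
noncomputable section

def rad (b : Bool) : ℝ := if b then 1 else -1

lemma rad_mul_self (b : Bool) : rad b * rad b = 1 := by cases b <;> simp [rad]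

lemma abs_rad (b : Bool) : |rad b| ≤ 1 := by cases b <;> simp [rad]

/-- flip coordinate i -/
def flip {N : ℕ} (i : Fin N) : Equiv.Perm (Fin N → Bool) where
  toFun σ := Function.update σ i (! σ i)
  invFun σ := Function.update σ i (! σ i)
  left_inv σ := by
    funext j
    by_cases h : j = i
    · subst h; simp [Function.update]
    · simp [Function.update, h]
  right_inv σ := by
    funext j
    by_cases h : j = i
    · subst h; simp [Function.update]
    · simp [Function.update, h]

lemma flip_apply_same {N : ℕ} (i : Fin N) (σ : Fin N → Bool) : flip i σ i = ! σ i := by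
  simp [flip, Function.update]

lemma flip_apply_ne {N : ℕ} (i : Fin N) (σ : Fin N → Bool) {j : Fin N} (h : j ≠ i) :
    flip i σ j = σ j := by simp [flip, Function.update, h]

lemma rad_flip_same {N : ℕ} (i : Fin N) (σ : Fin N → Bool) :
    rad (flip i σ i) = - rad (σ i) := by
  rw [flip_apply_same]; cases σ i <;> simp [rad]

/-- if g is odd under flipping coordinate i, its sum vanishes -/
lemma sum_eq_zero_of_flip {N : ℕ} (i : Fin N) (g : (Fin N → Bool) → ℝ)
    (h : ∀ σ, g (flip i σ) = - g σ) : ∑ σ : Fin N → Bool, g σ = 0 := by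
  have h1 : ∑ σ : Fin N → Bool, g σ = ∑ σ : Fin N → Bool, g (flip i σ) :=
    (Fintype.sum_equiv (flip i) _ _ (fun σ => rfl)).symm
  have h2 : ∑ σ : Fin N → Bool, g (flip i σ) = - ∑ σ : Fin N → Bool, g σ := by
    simp [h]
  linarith [h1, h2]

lemma sum_rad_mul_rad {N : ℕ} (i j : Fin N) (hij : i ≠ j) :
    ∑ σ : Fin N → Bool, rad (σ i) * rad (σ j) = 0 := by
  refine sum_eq_zero_of_flip i _ fun σ => ?_
  rw [rad_flip_same, flip_apply_ne i σ (Ne.symm hij)]; ring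

/-- the Rademacher sum -/
def RS {N : ℕ} (b : Fin N → ℝ) (σ : Fin N → Bool) : ℝ := ∑ i, b i * rad (σ i)

lemma sum_RS_sq {N : ℕ} (b : Fin N → ℝ) :
    ∑ σ : Fin N → Bool, (RS b σ) ^ 2 = 2 ^ N * ∑ i, (b i) ^ 2 := by
  have expand : ∀ σ, (RS b σ) ^ 2 = ∑ i, ∑ j, (b i * b j) * (rad (σ i) * rad (σ j)) := by
    intro σ
    rw [sq, RS, Finset.sum_mul_sum]
    congr 1; funext i; congr 1; funext j; ring
  simp only [expand]
  rw [Finset.sum_comm]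
  have key : ∀ i j : Fin N, ∑ σ : Fin N → Bool, (b i * b j) * (rad (σ i) * rad (σ j))
      = if i = j then 2 ^ N * (b i)^2 else 0 := by
    intro i j
    by_cases h : i = j
    · subst h
      have : ∀ σ : Fin N → Bool, (b i * b i) * (rad (σ i) * rad (σ i)) = b i ^ 2 := by
        intro σ; rw [rad_mul_self]; ring
      simp only [this, Finset.sum_const, Finset.card_univ, Fintype.card_fun,
        Fintype.card_bool, Fintype.card_fin, nsmul_eq_mul, if_pos rfl]
      push_cast; ring
    · rw [← Finset.mul_sum, sum_rad_mul_rad i j h, mul_zero, if_neg h]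
  calc ∑ i : Fin N, ∑ σ : Fin N → Bool, ∑ j, (b i * b j) * (rad (σ i) * rad (σ j))
      = ∑ i : Fin N, ∑ j, ∑ σ : Fin N → Bool, (b i * b j) * (rad (σ i) * rad (σ j)) := by
        refine Finset.sum_congr rfl fun i _ => Finset.sum_comm
    _ = ∑ i : Fin N, ∑ j, if i = j then 2 ^ N * (b i)^2 else 0 := by
        simp only [key]
    _ = 2 ^ N * ∑ i, (b i) ^ 2 := by
        rw [Finset.mul_sum]
        refine Finset.sum_congr rfl fun i _ => ?_
        simp


lemma sum_snoc {N : ℕ} (g : (Fin (N+1) → Bool) → ℝ) :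
    ∑ σ : Fin (N+1) → Bool, g σ =
      ∑ τ : Fin N → Bool, (g (Fin.snoc τ false) + g (Fin.snoc τ true)) := by
  rw [← Fintype.sum_equiv (Fin.snocEquiv (fun _ => Bool)) (fun p => g ((Fin.snocEquiv _) p)) g
    (fun p => rfl)]
  rw [Fintype.sum_prod_type]
  rw [Fintype.sum_bool]
  rw [← Finset.sum_add_distrib]
  refine Finset.sum_congr rfl fun τ _ => ?_
  simp [Fin.snocEquiv, add_comm]


lemma RS_snoc {N : ℕ} (b : Fin (N+1) → ℝ) (τ : Fin N → Bool) (c : Bool) :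
    RS b (Fin.snoc τ c) = RS (b ∘ Fin.castSucc) τ + b (Fin.last N) * rad c := by
  rw [RS, Fin.sum_univ_castSucc]
  simp [RS, Fin.snoc_castSucc, Fin.snoc_last]

lemma sum_RS_four {N : ℕ} (b : Fin N → ℝ) :
    ∑ σ : Fin N → Bool, (RS b σ) ^ 4 ≤ 3 * 2 ^ N * (∑ i, (b i) ^ 2) ^ 2 := by
  induction N with
  | zero => simp [RS]
  | succ N ih =>
    rw [sum_snoc]
    set c := b (Fin.last N) with hc
    set b' := b ∘ Fin.castSucc with hb'
    have hpt : ∀ τ : Fin N → Bool,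
        (RS b (Fin.snoc τ false)) ^ 4 + (RS b (Fin.snoc τ true)) ^ 4
          = 2 * (RS b' τ)^4 + 12 * (RS b' τ)^2 * c^2 + 2 * c^4 := by
      intro τ
      rw [RS_snoc, RS_snoc]
      simp only [rad]
      norm_num
      ring
    rw [Finset.sum_congr rfl (fun τ _ => hpt τ)]
    have hsq := sum_RS_sq b'
    have h4 := ih b'
    have hsum : ∑ i : Fin (N+1), (b i)^2 = (∑ i : Fin N, (b' i)^2) + c^2 := by
      rw [Fin.sum_univ_castSucc]; rfl
    rw [Finset.sum_add_distrib, Finset.sum_add_distrib, Finset.sum_const, Finset.card_univ]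
    have hcard : (Fintype.card (Fin N → Bool) : ℝ) = 2 ^ N := by
      simp [Fintype.card_fun]
    rw [hsum]
    have e1 : ∑ τ : Fin N → Bool, 2 * (RS b' τ)^4 = 2 * ∑ τ : Fin N → Bool, (RS b' τ)^4 := by
      rw [Finset.mul_sum]
    have e2 : ∑ τ : Fin N → Bool, 12 * (RS b' τ)^2 * c^2
        = 12 * c^2 * (2 ^ N * ∑ i, (b' i)^2) := by
      rw [← hsq, Finset.mul_sum]
      congr 1; funext τ; ring
    rw [e1, e2]
    have h2N : (0:ℝ) < 2 ^ N := by positivity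
    have hb2 : (0:ℝ) ≤ ∑ i, (b' i)^2 := Finset.sum_nonneg fun i _ => sq_nonneg _
    rw [nsmul_eq_mul, hcard]
    have hexp : 3 * 2^(N+1) * ((∑ i, (b' i)^2) + c^2)^2
        = 6*2^N*(∑ i, (b' i)^2)^2 + 12*2^N*(∑ i, (b' i)^2)*c^2 + 6*(2^N*c^4) := by ring
    have h4' := mul_le_mul_of_nonneg_left h4 (show (0:ℝ) ≤ 2 by norm_num)
    have hc4 : (0:ℝ) ≤ 2^N * c^4 := by positivity
    rw [hexp]
    linarith [h4', hc4]

/-- Khintchine: L¹ lower bound -/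
lemma khintchine {N : ℕ} (b : Fin N → ℝ) :
    2 ^ N * Real.sqrt (∑ i, (b i) ^ 2) ≤ Real.sqrt 3 * ∑ σ : Fin N → Bool, |RS b σ| := by
  set v := ∑ i, (b i) ^ 2 with hv
  have hv0 : 0 ≤ v := Finset.sum_nonneg fun i _ => sq_nonneg _
  set s1 := ∑ σ : Fin N → Bool, |RS b σ| with hs1
  set s3 := ∑ σ : Fin N → Bool, |RS b σ| ^ 3 with hs3
  have hs1nn : 0 ≤ s1 := Finset.sum_nonneg fun σ _ => abs_nonneg _
  have hs3nn : 0 ≤ s3 := Finset.sum_nonneg fun σ _ => pow_nonneg (abs_nonneg _) 3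
  -- Cauchy-Schwarz 1 : (∑ RS²)² ≤ s1 * s3
  have cs1 : (∑ σ : Fin N → Bool, (RS b σ)^2) ^ 2 ≤ s1 * s3 := by
    have := Finset.sum_mul_sq_le_sq_mul_sq Finset.univ
      (fun σ : Fin N → Bool => Real.sqrt |RS b σ|)
      (fun σ : Fin N → Bool => |RS b σ| * Real.sqrt |RS b σ|)
    calc (∑ σ : Fin N → Bool, (RS b σ)^2) ^ 2
        = (∑ σ : Fin N → Bool, Real.sqrt |RS b σ| * (|RS b σ| * Real.sqrt |RS b σ|)) ^ 2 := by
          congr 1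
          refine Finset.sum_congr rfl fun σ _ => ?_
          rw [show Real.sqrt |RS b σ| * (|RS b σ| * Real.sqrt |RS b σ|)
              = (Real.sqrt |RS b σ| * Real.sqrt |RS b σ|) * |RS b σ| by ring,
            Real.mul_self_sqrt (abs_nonneg _), ← abs_mul, abs_mul_self, ← pow_two]
      _ ≤ (∑ σ : Fin N → Bool, (Real.sqrt |RS b σ|)^2)
            * ∑ σ : Fin N → Bool, (|RS b σ| * Real.sqrt |RS b σ|)^2 := this
      _ = s1 * s3 := by
          congr 1
          · refine Finset.sum_congr rfl fun σ _ => Real.sq_sqrt (abs_nonneg _)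
          · refine Finset.sum_congr rfl fun σ _ => ?_
            rw [mul_pow, Real.sq_sqrt (abs_nonneg _)]
            ring
  -- Cauchy-Schwarz 2 : s3² ≤ (∑RS²)(∑RS⁴)
  have cs2 : s3 ^ 2 ≤ (∑ σ : Fin N → Bool, (RS b σ)^2) * ∑ σ : Fin N → Bool, (RS b σ)^4 := by
    have := Finset.sum_mul_sq_le_sq_mul_sq Finset.univ
      (fun σ : Fin N → Bool => |RS b σ|) (fun σ : Fin N → Bool => (RS b σ)^2)
    calc s3 ^ 2 = (∑ σ : Fin N → Bool, |RS b σ| * (RS b σ)^2) ^ 2 := by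
          congr 1
          refine Finset.sum_congr rfl fun σ _ => ?_
          rw [show (3:ℕ) = 1 + 2 by norm_num, pow_add, pow_one, sq_abs]
      _ ≤ (∑ σ : Fin N → Bool, |RS b σ|^2) * ∑ σ : Fin N → Bool, ((RS b σ)^2)^2 := this
      _ = (∑ σ : Fin N → Bool, (RS b σ)^2) * ∑ σ : Fin N → Bool, (RS b σ)^4 := by
          congr 1
          · exact Finset.sum_congr rfl fun σ _ => sq_abs _
          · exact Finset.sum_congr rfl fun σ _ => by ring
  rw [sum_RS_sq b, ← hv] at cs1 cs2
  have h4 := sum_RS_four b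
  rw [← hv] at h4
  rcases eq_or_lt_of_le hv0 with h0 | hpos
  · rw [← h0, Real.sqrt_zero, mul_zero]
    positivity
  · set w := Real.sqrt v with hw
    have hwpos : 0 < w := Real.sqrt_pos.mpr hpos
    have hw2 : w ^ 2 = v := Real.sq_sqrt hv0
    have h2N : (0:ℝ) < 2 ^ N := by positivity
    have hsqrt3 : (0:ℝ) ≤ Real.sqrt 3 := Real.sqrt_nonneg 3
    -- s3 ≤ √3 * 2^N * w^3
    have hs3le : s3 ≤ Real.sqrt 3 * 2 ^ N * w ^ 3 := by
      have hsq : s3 ^ 2 ≤ (Real.sqrt 3 * 2 ^ N * w ^ 3) ^ 2 := by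
        have : (Real.sqrt 3 * 2 ^ N * w ^ 3) ^ 2 = (Real.sqrt 3)^2 * (2^N)^2 * (w^2)^3 := by ring
        rw [this, Real.sq_sqrt (by norm_num : (0:ℝ) ≤ 3), hw2]
        calc s3 ^ 2 ≤ (2 ^ N * v) * ∑ σ : Fin N → Bool, (RS b σ)^4 := cs2
          _ ≤ (2 ^ N * v) * (3 * 2 ^ N * v ^ 2) := by
              apply mul_le_mul_of_nonneg_left h4 (by positivity)
          _ = 3 * (2^N)^2 * v^3 := by ring
      have h2 : (0:ℝ) ≤ Real.sqrt 3 * 2 ^ N * w ^ 3 := by positivity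
      nlinarith [hs3nn, h2, hsq]
    -- conclude
    have key : (2 ^ N * v) ^ 2 ≤ s1 * (Real.sqrt 3 * 2 ^ N * w ^ 3) := by
      calc (2 ^ N * v) ^ 2 ≤ s1 * s3 := cs1
        _ ≤ s1 * (Real.sqrt 3 * 2 ^ N * w ^ 3) := mul_le_mul_of_nonneg_left hs3le hs1nn
    have hv_eq : v = w * w := by rw [← hw2]; ring
    show 2 ^ N * w ≤ Real.sqrt 3 * s1
    have hpos3 : (0:ℝ) < 2 ^ N * w ^ 3 := by positivity
    rw [← mul_le_mul_iff_of_pos_right hpos3]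
    calc 2 ^ N * w * (2 ^ N * w ^ 3) = (2 ^ N * (w * w)) ^ 2 := by ring
      _ ≤ s1 * (Real.sqrt 3 * 2 ^ N * w ^ 3) := by rw [← hv_eq]; exact key
      _ = Real.sqrt 3 * s1 * (2 ^ N * w ^ 3) := by ring

variable {K : Type} [TopologicalSpace K] [CompactSpace K] [T2Space K]

example : NormalSpace K := inferInstance
example : RegularSpace K := inferInstance

/-- splitting an open set meeting a perfect set -/
lemma exists_split {C V : Set K} (hC : IsClosed C)
    (hperf : ∀ x ∈ C, (𝓝[C \ {x}] x).NeBot) (hV : IsOpen V) (hne : (V ∩ C).Nonempty) :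
    ∃ Vf Vt : Set K, IsOpen Vf ∧ IsOpen Vt ∧ Vf ⊆ V ∧ Vt ⊆ V ∧
      (Vf ∩ C).Nonempty ∧ (Vt ∩ C).Nonempty ∧ closure Vf ∩ closure Vt = ∅ := by
  obtain ⟨x, hxV, hxC⟩ := hne
  have hnb : (𝓝[C \ {x}] x).NeBot := hperf x hxC
  have hxcl : x ∈ closure (C \ {x}) := mem_closure_iff_nhdsWithin_neBot.mpr hnb
  obtain ⟨y, hyV, hyCd⟩ := (_root_.mem_closure_iff.mp hxcl) V hV hxV
  have hyx : y ≠ x := hyCd.2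
  have hyC : y ∈ C := hyCd.1
  obtain ⟨A, B, hA, hB, hxA, hyB, hAB⟩ := t2_separation (Ne.symm hyx)
  -- regular: shrink
  have h1 : V ∩ A ∈ 𝓝 x := by
    exact Filter.inter_mem (hV.mem_nhds hxV) (hA.mem_nhds hxA)
  have h2 : V ∩ B ∈ 𝓝 y := by
    exact Filter.inter_mem (hV.mem_nhds hyV) (hB.mem_nhds hyB)
  obtain ⟨t1, ht1n, ht1c, ht1s⟩ := exists_mem_nhds_isClosed_subset h1
  obtain ⟨t2, ht2n, ht2c, ht2s⟩ := exists_mem_nhds_isClosed_subset h2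
  refine ⟨interior t1, interior t2, isOpen_interior, isOpen_interior, ?_, ?_, ?_, ?_, ?_⟩
  · exact (interior_subset.trans ht1s).trans Set.inter_subset_left
  · exact (interior_subset.trans ht2s).trans Set.inter_subset_left
  · exact ⟨x, mem_interior_iff_mem_nhds.mpr ht1n, hxC⟩
  · exact ⟨y, mem_interior_iff_mem_nhds.mpr ht2n, hyC⟩
  · have c1 : closure (interior t1) ⊆ A :=
      (closure_minimal interior_subset ht1c).trans (ht1s.trans Set.inter_subset_right)
    have c2 : closure (interior t2) ⊆ B :=
      (closure_minimal interior_subset ht2c).trans (ht2s.trans Set.inter_subset_right)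
    rw [← Set.disjoint_iff_inter_eq_empty]
    exact hAB.mono c1 c2

open scoped Classical in
/-- choice-based split function -/
def splitSet (C V : Set K) (b : Bool) : Set K :=
  if h : IsClosed C ∧ (∀ x ∈ C, (𝓝[C \ {x}] x).NeBot) ∧ IsOpen V ∧ (V ∩ C).Nonempty then
    (if b then (exists_split h.1 h.2.1 h.2.2.1 h.2.2.2).choose_spec.choose
     else (exists_split h.1 h.2.1 h.2.2.1 h.2.2.2).choose)
  else ∅

lemma splitSet_spec {C V : Set K} (hC : IsClosed C)
    (hperf : ∀ x ∈ C, (𝓝[C \ {x}] x).NeBot) (hV : IsOpen V) (hne : (V ∩ C).Nonempty) :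
    (∀ b, IsOpen (splitSet C V b)) ∧ (∀ b, splitSet C V b ⊆ V) ∧
      (∀ b, (splitSet C V b ∩ C).Nonempty) ∧
      closure (splitSet C V false) ∩ closure (splitSet C V true) = ∅ := by
  have h : IsClosed C ∧ (∀ x ∈ C, (𝓝[C \ {x}] x).NeBot) ∧ IsOpen V ∧ (V ∩ C).Nonempty :=
    ⟨hC, hperf, hV, hne⟩
  have hs := (exists_split h.1 h.2.1 h.2.2.1 h.2.2.2).choose_spec.choose_spec
  have ef : splitSet C V false = (exists_split h.1 h.2.1 h.2.2.1 h.2.2.2).choose := by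
    classical
    simp only [splitSet, dif_pos h]
    simp
  have et : splitSet C V true
      = (exists_split h.1 h.2.1 h.2.2.1 h.2.2.2).choose_spec.choose := by
    classical
    simp only [splitSet, dif_pos h]
    simp
  refine ⟨fun b => ?_, fun b => ?_, fun b => ?_, ?_⟩
  · cases b
    · rw [ef]; exact hs.1
    · rw [et]; exact hs.2.1
  · cases b
    · rw [ef]; exact hs.2.2.1
    · rw [et]; exact hs.2.2.2.1
  · cases b
    · rw [ef]; exact hs.2.2.2.2.1
    · rw [et]; exact hs.2.2.2.2.2.1
  · rw [ef, et]; exact hs.2.2.2.2.2.2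

/-- the tree of open sets -/
def tV (C : Set K) : ℕ → (ℕ → Bool) → Set K
  | 0, _ => Set.univ
  | (N+1), σ => splitSet C (tV C N σ) (σ N)

variable {C : Set K} (hC : IsClosed C) (hCne : C.Nonempty)
  (hperf : ∀ x ∈ C, (𝓝[C \ {x}] x).NeBot)

include hC hCne hperf in
lemma tV_good (N : ℕ) (σ : ℕ → Bool) : IsOpen (tV C N σ) ∧ ((tV C N σ) ∩ C).Nonempty := by
  induction N with
  | zero =>
    refine ⟨isOpen_univ, ?_⟩
    rw [show tV C 0 σ = Set.univ from rfl, Set.univ_inter]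
    exact hCne
  | succ N ih =>
    have hs := splitSet_spec hC hperf ih.1 ih.2
    exact ⟨hs.1 (σ N), hs.2.2.1 (σ N)⟩

def tW (C : Set K) (N : ℕ) (σ : ℕ → Bool) : Set K := closure (tV C N σ ∩ C)

lemma tW_closed (N : ℕ) (σ : ℕ → Bool) : IsClosed (tW C N σ) := isClosed_closure

include hC in
lemma tW_subset_C (N : ℕ) (σ : ℕ → Bool) : tW C N σ ⊆ C :=
  closure_minimal Set.inter_subset_right hC

include hC hCne hperf in
lemma tW_nonempty (N : ℕ) (σ : ℕ → Bool) : (tW C N σ).Nonempty :=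
  ((tV_good hC hCne hperf N σ).2).mono subset_closure

include hC hCne hperf in
lemma tV_succ_subset (N : ℕ) (σ : ℕ → Bool) : tV C (N+1) σ ⊆ tV C N σ := by
  have hg := tV_good hC hCne hperf N σ
  exact (splitSet_spec hC hperf hg.1 hg.2).2.1 (σ N)

include hC hCne hperf in
lemma tW_succ_subset (N : ℕ) (σ : ℕ → Bool) : tW C (N+1) σ ⊆ tW C N σ :=
  closure_mono (Set.inter_subset_inter_left _ (tV_succ_subset hC hCne hperf N σ))

include hC hCne hperf in
lemma tW_mono {M N : ℕ} (h : M ≤ N) (σ : ℕ → Bool) : tW C N σ ⊆ tW C M σ := by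
  induction N with
  | zero => rw [Nat.le_zero.mp h]
  | succ N ih =>
    rcases Nat.lt_or_ge M (N+1) with h' | h'
    · exact (tW_succ_subset hC hCne hperf N σ).trans (ih (Nat.lt_succ_iff.mp h'))
    · rw [Nat.le_antisymm h h']

lemma tV_congr {N : ℕ} {σ τ : ℕ → Bool} (h : ∀ i < N, σ i = τ i) : tV C N σ = tV C N τ := by
  induction N with
  | zero => rfl
  | succ N ih =>
    show splitSet C (tV C N σ) (σ N) = splitSet C (tV C N τ) (τ N)
    rw [ih (fun i hi => h i (Nat.lt_succ_of_lt hi)), h N (Nat.lt_succ_self N)]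

lemma tW_congr {N : ℕ} {σ τ : ℕ → Bool} (h : ∀ i < N, σ i = τ i) : tW C N σ = tW C N τ := by
  rw [tW, tW, tV_congr h]

include hC hCne hperf in
lemma tW_disjoint : ∀ {N : ℕ} {σ τ : ℕ → Bool}, (∃ i, i < N ∧ σ i ≠ τ i) →
    tW C N σ ∩ tW C N τ = ∅ := by
  intro N
  induction N with
  | zero => rintro σ τ ⟨i, hi, _⟩; exact absurd hi (Nat.not_lt_zero i)
  | succ N ih =>
    rintro σ τ ⟨i, hi, hne⟩
    by_cases hiN : i < N
    · have := ih ⟨i, hiN, hne⟩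
      apply Set.eq_empty_of_subset_empty
      rw [← this]
      exact Set.inter_subset_inter (tW_succ_subset hC hCne hperf N σ)
        (tW_succ_subset hC hCne hperf N τ)
    · have hiN' : i = N := by omega
      rw [hiN'] at hne
      by_cases hlow : ∃ j, j < N ∧ σ j ≠ τ j
      · have := ih hlow
        apply Set.eq_empty_of_subset_empty
        rw [← this]
        exact Set.inter_subset_inter (tW_succ_subset hC hCne hperf N σ)
          (tW_succ_subset hC hCne hperf N τ)
      · push_neg at hlow
        have heq : tV C N σ = tV C N τ := tV_congr (fun j hj => hlow j hj)
        have hg := tV_good hC hCne hperf N σ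
        have hs := splitSet_spec hC hperf hg.1 hg.2
        have hsubσ : tW C (N+1) σ ⊆ closure (splitSet C (tV C N σ) (σ N)) :=
          closure_mono Set.inter_subset_left
        have hsubτ : tW C (N+1) τ ⊆ closure (splitSet C (tV C N σ) (τ N)) := by
          have : tV C (N+1) τ = splitSet C (tV C N σ) (τ N) := by
            show splitSet C (tV C N τ) (τ N) = _
            rw [heq]
          exact (closure_mono Set.inter_subset_left).trans (by rw [this])
        apply Set.eq_empty_of_subset_empty
        cases hσN : σ N
        · cases hτN : τ N
          · exact absurd (hσN.trans hτN.symm) hne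
          · rw [hσN] at hsubσ; rw [hτN] at hsubτ
            calc tW C (N+1) σ ∩ tW C (N+1) τ
                ⊆ closure (splitSet C (tV C N σ) false) ∩ closure (splitSet C (tV C N σ) true) :=
                  Set.inter_subset_inter hsubσ hsubτ
              _ = ∅ := hs.2.2.2
        · cases hτN : τ N
          · rw [hσN] at hsubσ; rw [hτN] at hsubτ
            calc tW C (N+1) σ ∩ tW C (N+1) τ
                ⊆ closure (splitSet C (tV C N σ) true) ∩ closure (splitSet C (tV C N σ) false) :=
                  Set.inter_subset_inter hsubσ hsubτ
              _ = ∅ := by rw [Set.inter_comm]; exact hs.2.2.2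
          · exact absurd (hσN.trans hτN.symm) hne

include hC hCne hperf in
lemma branch_nonempty (σ : ℕ → Bool) : (⋂ N, tW C N σ).Nonempty := by
  apply IsCompact.nonempty_iInter_of_sequence_nonempty_isCompact_isClosed
  · exact fun i => tW_succ_subset hC hCne hperf i σ
  · exact fun i => tW_nonempty hC hCne hperf i σ
  · exact (tW_closed 0 σ).isCompact
  · exact fun i => tW_closed i σ

/-- a point on each branch -/
def pt (hC : IsClosed C) (hCne : C.Nonempty)
    (hperf : ∀ x ∈ C, (𝓝[C \ {x}] x).NeBot) (σ : ℕ → Bool) : K :=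
  (branch_nonempty hC hCne hperf σ).some

lemma pt_mem (σ : ℕ → Bool) (N : ℕ) : pt hC hCne hperf σ ∈ tW C N σ := by
  have := (branch_nonempty hC hCne hperf σ).some_mem
  rw [Set.mem_iInter] at this
  exact this N


/-- extend a finite boolean vector by `false` -/
def extb {N : ℕ} (σ : Fin N → Bool) : ℕ → Bool := fun i => if h : i < N then σ ⟨i, h⟩ else false

lemma extb_lt {N : ℕ} (σ : Fin N → Bool) {i : ℕ} (h : i < N) : extb σ i = σ ⟨i, h⟩ := dif_pos h

/-- restriction -/
def resb (N : ℕ) (σ : ℕ → Bool) : Fin N → Bool := fun i => σ i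

lemma resb_extb {N : ℕ} (σ : Fin N → Bool) : resb N (extb σ) = σ := by
  funext i
  rw [resb, extb]
  simp [i.isLt]

/-- simple functions: constant on level-N pieces -/
def IsSimple (C : Set K) (F : C(K, ℝ)) (N : ℕ) (c : (Fin N → Bool) → ℝ) : Prop :=
  ∀ (σ : ℕ → Bool) (x : K), x ∈ tW C N σ → F x = c (resb N σ)

include hC hCne hperf in
lemma isSimple_mono {F : C(K, ℝ)} {N M : ℕ} {c : (Fin N → Bool) → ℝ} (hNM : N ≤ M)
    (hF : IsSimple C F N c) :
    IsSimple C F M (fun σ => c (fun i => σ (Fin.castLE hNM i))) := by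
  intro σ x hx
  have := hF σ x (tW_mono hC hCne hperf hNM σ hx)
  rw [this]
  rfl

lemma isSimple_mul {F G : C(K, ℝ)} {N : ℕ} {c d : (Fin N → Bool) → ℝ}
    (hF : IsSimple C F N c) (hG : IsSimple C G N d) :
    IsSimple C (F * G) N (fun σ => c σ * d σ) := by
  intro σ x hx
  show F x * G x = _
  rw [hF σ x hx, hG σ x hx]

include hC hCne hperf in
/-- the Rademacher-like continuous functions on K -/
lemma exists_G (n : ℕ) : ∃ G : C(K, ℝ), (∀ x, |G x| ≤ 1) ∧
    IsSimple C G (n+1) (fun σ => rad (σ (Fin.last n))) := by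
  classical
  set Sf : Set K := ⋃ σ ∈ (Finset.univ.filter fun σ : Fin (n+1) → Bool => σ (Fin.last n) = false),
    tW C (n+1) (extb σ) with hSf
  set St : Set K := ⋃ σ ∈ (Finset.univ.filter fun σ : Fin (n+1) → Bool => σ (Fin.last n) = true),
    tW C (n+1) (extb σ) with hSt
  have hSfc : IsClosed Sf := Set.Finite.isClosed_biUnion (Finset.finite_toSet _)
    (fun σ _ => tW_closed _ _)
  have hStc : IsClosed St := Set.Finite.isClosed_biUnion (Finset.finite_toSet _)
    (fun σ _ => tW_closed _ _)
  have hdisj : Disjoint Sf St := by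
    rw [Set.disjoint_iff_inter_eq_empty]
    rw [hSf, hSt]
    apply Set.eq_empty_of_forall_notMem
    intro x hx
    obtain ⟨hf, ht⟩ := hx
    simp only [Set.mem_iUnion, Finset.mem_coe, Finset.mem_filter, Finset.mem_univ, true_and]
      at hf ht
    obtain ⟨σ, hσ, hxσ⟩ := hf
    obtain ⟨τ, hτ, hxτ⟩ := ht
    have hne : extb σ n ≠ extb τ n := by
      rw [extb_lt σ (Nat.lt_succ_self n), extb_lt τ (Nat.lt_succ_self n)]
      show σ (Fin.last n) ≠ τ (Fin.last n)
      rw [hσ, hτ]; simp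
    have := tW_disjoint hC hCne hperf ⟨n, Nat.lt_succ_self n, hne⟩
    exact Set.eq_empty_iff_forall_notMem.mp this x ⟨hxσ, hxτ⟩
  obtain ⟨u, hu0, hu1, huI⟩ := exists_continuous_zero_one_of_isClosed hSfc hStc hdisj
  refine ⟨ContinuousMap.mk (fun x => 2 * u x - 1)
    (by continuity), fun x => ?_, ?_⟩
  · have := huI x
    simp only [Set.mem_Icc] at this
    rw [abs_le]
    constructor <;> simp only [ContinuousMap.coe_mk] <;> linarith [this.1, this.2]
  · intro σ x hx
    have hrew : tW C (n+1) σ = tW C (n+1) (extb (resb (n+1) σ)) := by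
      apply tW_congr
      intro i hi
      rw [extb_lt _ hi]
      rfl
    rw [hrew] at hx
    simp only [ContinuousMap.coe_mk]
    cases hb : (resb (n+1) σ) (Fin.last n)
    · have hxSf : x ∈ Sf := by
        rw [hSf]
        simp only [Set.mem_iUnion, Finset.mem_coe, Finset.mem_filter, Finset.mem_univ, true_and]
        exact ⟨resb (n+1) σ, hb, hx⟩
      have := hu0 hxSf
      simp only [Pi.zero_apply] at this
      rw [this]
      norm_num [rad, hb]
    · have hxSt : x ∈ St := by
        rw [hSt]
        simp only [Set.mem_iUnion, Finset.mem_coe, Finset.mem_filter, Finset.mem_univ, true_and]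
        exact ⟨resb (n+1) σ, hb, hx⟩
      have := hu1 hxSt
      simp only [Pi.one_apply] at this
      rw [this]
      norm_num [rad, hb]


include hC hCne hperf in
lemma pt_tW_of_resb {N : ℕ} (σ : ℕ → Bool) :
    pt hC hCne hperf σ ∈ tW C N (extb (resb N σ)) := by
  have : tW C N σ = tW C N (extb (resb N σ)) := by
    apply tW_congr
    intro i hi
    rw [extb_lt _ hi]; rfl
  rw [← this]
  exact pt_mem hC hCne hperf σ N

/-- the chosen Rademacher functions -/
def Gf (hC : IsClosed C) (hCne : C.Nonempty)
    (hperf : ∀ x ∈ C, (𝓝[C \ {x}] x).NeBot) (n : ℕ) : C(K, ℝ) :=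
  (exists_G hC hCne hperf n).choose

lemma Gf_bd (n : ℕ) (x : K) : |Gf hC hCne hperf n x| ≤ 1 :=
  (exists_G hC hCne hperf n).choose_spec.1 x

lemma Gf_norm (n : ℕ) : ‖Gf hC hCne hperf n‖ ≤ 1 :=
  ContinuousMap.norm_le _ (by norm_num) |>.mpr (fun x => Gf_bd hC hCne hperf n x)

lemma Gf_simple (n : ℕ) :
    IsSimple C (Gf hC hCne hperf n) (n+1) (fun σ => rad (σ (Fin.last n))) :=
  (exists_G hC hCne hperf n).choose_spec.2

/-- level-N average -/
def avg (hC : IsClosed C) (hCne : C.Nonempty)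
    (hperf : ∀ x ∈ C, (𝓝[C \ {x}] x).NeBot) (F : C(K, ℝ)) (N : ℕ) : ℝ :=
  (∑ σ : Fin N → Bool, F (pt hC hCne hperf (extb σ))) / 2 ^ N

lemma abs_avg_le (F : C(K, ℝ)) (N : ℕ) : |avg hC hCne hperf F N| ≤ ‖F‖ := by
  rw [avg, abs_div]
  rw [abs_of_pos (show (0:ℝ) < 2 ^ N by positivity)]
  rw [div_le_iff₀ (show (0:ℝ) < 2 ^ N by positivity)]
  calc |∑ σ : Fin N → Bool, F (pt hC hCne hperf (extb σ))|
      ≤ ∑ σ : Fin N → Bool, |F (pt hC hCne hperf (extb σ))| := Finset.abs_sum_le_sum_abs _ _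
    _ ≤ ∑ _σ : Fin N → Bool, ‖F‖ := Finset.sum_le_sum fun σ _ =>
        F.norm_coe_le_norm _
    _ = ‖F‖ * 2 ^ N := by
        rw [Finset.sum_const, Finset.card_univ]
        simp [Fintype.card_fun, mul_comm]

/-- counting lemma -/
lemma sum_extend {N : ℕ} (k : ℕ) (c : (Fin N → Bool) → ℝ) :
    ∑ σ : Fin (N+k) → Bool, c (fun i => σ (Fin.castLE (Nat.le_add_right N k) i))
      = 2 ^ k * ∑ τ : Fin N → Bool, c τ := by
  induction k with
  | zero =>
    rw [pow_zero, one_mul]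
    apply Finset.sum_congr rfl
    intro σ _
    congr 1
  | succ k ih =>
    show (∑ σ : Fin (N+k+1) → Bool, c fun i => σ (Fin.castLE (Nat.le_add_right N (k+1)) i))
      = 2^(k+1) * ∑ τ : Fin N → Bool, c τ
    rw [sum_snoc (N := N + k)]
    have key : ∀ (τ : Fin (N+k) → Bool) (b : Bool),
        c (fun i => (Fin.snoc τ b : Fin (N+k+1) → Bool) (Fin.castLE (Nat.le_add_right N (k+1)) i))
          = c (fun i => τ (Fin.castLE (Nat.le_add_right N k) i)) := by
      intro τ b
      congr 1
      funext i
      have hcast : (Fin.castLE (Nat.le_add_right N (k+1)) i)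
          = Fin.castSucc (Fin.castLE (Nat.le_add_right N k) i) := by
        apply Fin.ext; rfl
      rw [hcast, Fin.snoc_castSucc]
    have : ∀ τ : Fin (N+k) → Bool,
        c (fun i => (Fin.snoc τ false : Fin (N+k+1) → Bool) (Fin.castLE (Nat.le_add_right N (k+1)) i))
        + c (fun i => (Fin.snoc τ true : Fin (N+k+1) → Bool) (Fin.castLE (Nat.le_add_right N (k+1)) i))
          = 2 * c (fun i => τ (Fin.castLE (Nat.le_add_right N k) i)) := by
      intro τ
      rw [key τ false, key τ true]; ring
    rw [Finset.sum_congr rfl (fun τ _ => this τ), ← Finset.mul_sum, ih]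
    ring

include hC hCne hperf in
lemma avg_simple {F : C(K, ℝ)} {N : ℕ} {c : (Fin N → Bool) → ℝ} (hF : IsSimple C F N c)
    {M : ℕ} (hNM : N ≤ M) :
    avg hC hCne hperf F M = (∑ τ : Fin N → Bool, c τ) / 2 ^ N := by
  obtain ⟨k, rfl⟩ := Nat.exists_eq_add_of_le hNM
  rw [avg]
  have hpt : ∀ σ : Fin (N+k) → Bool,
      F (pt hC hCne hperf (extb σ)) = c (fun i => σ (Fin.castLE (Nat.le_add_right N k) i)) := by
    intro σ
    have hmem : pt hC hCne hperf (extb σ) ∈ tW C N (extb σ) :=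
      tW_mono hC hCne hperf (Nat.le_add_right N k) _ (pt_mem hC hCne hperf (extb σ) (N+k))
    rw [hF (extb σ) _ hmem]
    congr 1
    funext i
    rw [resb, extb_lt σ (lt_of_lt_of_le i.isLt (Nat.le_add_right N k))]
    congr 1
  rw [Finset.sum_congr rfl (fun σ _ => hpt σ), sum_extend k c]
  rw [pow_add]
  field_simp

/-- fixed ultrafilter extending atTop -/
def UF : Ultrafilter ℕ := Ultrafilter.of atTop

lemma UF_le : (UF : Filter ℕ) ≤ atTop := Ultrafilter.of_le _

include hC hCne hperf in
lemma exists_lim (F : C(K, ℝ)) :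
    ∃ L : ℝ, Tendsto (avg hC hCne hperf F) (UF : Filter ℕ) (𝓝 L) := by
  have hmem : ∀ N, avg hC hCne hperf F N ∈ Set.Icc (-‖F‖) ‖F‖ := by
    intro N
    rw [Set.mem_Icc, ← abs_le]
    exact abs_avg_le hC hCne hperf F N
  have hle : (Ultrafilter.map (avg hC hCne hperf F) UF : Filter ℝ) ≤ 𝓟 (Set.Icc (-‖F‖) ‖F‖) := by
    rw [Filter.le_principal_iff]
    exact Filter.mem_map.mpr (Filter.univ_mem' (fun N => hmem N))
  obtain ⟨L, _, hL⟩ := isCompact_Icc.ultrafilter_le_nhds (Ultrafilter.map (avg hC hCne hperf F) UF) hle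
  exact ⟨L, hL⟩

def Lam0 (hC : IsClosed C) (hCne : C.Nonempty)
    (hperf : ∀ x ∈ C, (𝓝[C \ {x}] x).NeBot) (F : C(K, ℝ)) : ℝ :=
  (exists_lim hC hCne hperf F).choose

lemma Lam0_tendsto (F : C(K, ℝ)) :
    Tendsto (avg hC hCne hperf F) (UF : Filter ℕ) (𝓝 (Lam0 hC hCne hperf F)) :=
  (exists_lim hC hCne hperf F).choose_spec

include hC hCne hperf in
lemma lam0_unique {F : C(K, ℝ)} {L : ℝ}
    (h : Tendsto (avg hC hCne hperf F) (UF : Filter ℕ) (𝓝 L)) : Lam0 hC hCne hperf F = L :=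
  tendsto_nhds_unique (Lam0_tendsto hC hCne hperf F) h

include hC hCne hperf in
lemma avg_add (F G : C(K, ℝ)) (N : ℕ) :
    avg hC hCne hperf (F + G) N = avg hC hCne hperf F N + avg hC hCne hperf G N := by
  rw [avg, avg, avg, ← add_div]
  congr 1
  rw [← Finset.sum_add_distrib]
  exact Finset.sum_congr rfl fun σ _ => by simp

include hC hCne hperf in
lemma avg_smul (r : ℝ) (F : C(K, ℝ)) (N : ℕ) :
    avg hC hCne hperf (r • F) N = r * avg hC hCne hperf F N := by
  rw [avg, avg]
  have h : ∀ σ : Fin N → Bool, (r • F) (pt hC hCne hperf (extb σ))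
      = r * F (pt hC hCne hperf (extb σ)) := fun σ => by simp
  rw [Finset.sum_congr rfl (fun σ _ => h σ), ← Finset.mul_sum, mul_div_assoc]

/-- the positive functional -/
def Lam (hC : IsClosed C) (hCne : C.Nonempty)
    (hperf : ∀ x ∈ C, (𝓝[C \ {x}] x).NeBot) : C(K, ℝ) →L[ℝ] ℝ :=
  LinearMap.mkContinuous
    { toFun := Lam0 hC hCne hperf
      map_add' := fun F G => by
        apply lam0_unique hC hCne hperf
        have h1 := Lam0_tendsto hC hCne hperf F
        have h2 := Lam0_tendsto hC hCne hperf G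
        have := h1.add h2
        apply Tendsto.congr _ this
        intro N
        rw [avg_add hC hCne hperf]
      map_smul' := fun r F => by
        apply lam0_unique hC hCne hperf
        have h1 := Lam0_tendsto hC hCne hperf F
        have := h1.const_mul r
        apply Tendsto.congr _ this
        intro N
        rw [avg_smul hC hCne hperf] }
    1
    (fun F => by
      simp only [LinearMap.coe_mk, AddHom.coe_mk, one_mul]
      have h1 := Lam0_tendsto hC hCne hperf F
      have : Tendsto (fun N => |avg hC hCne hperf F N|) (UF : Filter ℕ)
          (𝓝 |Lam0 hC hCne hperf F|) := h1.abs
      exact le_of_tendsto this (Filter.Eventually.of_forall (abs_avg_le hC hCne hperf F)))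

lemma Lam_apply (F : C(K, ℝ)) : Lam hC hCne hperf F = Lam0 hC hCne hperf F := rfl

lemma Lam_norm_le (F : C(K, ℝ)) : |Lam hC hCne hperf F| ≤ ‖F‖ := by
  rw [Lam_apply]
  have h1 := Lam0_tendsto hC hCne hperf F
  exact le_of_tendsto h1.abs (Filter.Eventually.of_forall (abs_avg_le hC hCne hperf F))

lemma Lam_nonneg {F : C(K, ℝ)} (h : ∀ x, 0 ≤ F x) : 0 ≤ Lam hC hCne hperf F := by
  rw [Lam_apply]
  apply ge_of_tendsto (Lam0_tendsto hC hCne hperf F)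
  apply Filter.Eventually.of_forall
  intro N
  rw [avg]
  apply div_nonneg _ (by positivity)
  exact Finset.sum_nonneg fun σ _ => h _

include hC hCne hperf in
lemma Lam_simple {F : C(K, ℝ)} {N : ℕ} {c : (Fin N → Bool) → ℝ} (hF : IsSimple C F N c) :
    Lam hC hCne hperf F = (∑ τ : Fin N → Bool, c τ) / 2 ^ N := by
  rw [Lam_apply]
  apply lam0_unique hC hCne hperf
  have hconst : ∀ M, N ≤ M → avg hC hCne hperf F M = (∑ τ : Fin N → Bool, c τ) / 2 ^ N :=
    fun M hM => avg_simple hC hCne hperf hF hM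
  have hev : ∀ᶠ M in (UF : Filter ℕ), avg hC hCne hperf F M = (∑ τ : Fin N → Bool, c τ) / 2 ^ N :=
    UF_le (Filter.eventually_atTop.mpr ⟨N, hconst⟩)
  exact Tendsto.congr' (Filter.EventuallyEq.symm hev) tendsto_const_nhds


lemma lp1_summable (a : lp (fun _ : ℕ => ℝ) 1) : Summable (fun n => ‖a n‖) := by
  have h := lp.memℓp a
  have := h.summable (p := 1) (by norm_num)
  simpa using this

lemma lp1_norm (a : lp (fun _ : ℕ => ℝ) 1) : ‖a‖ = ∑' n, ‖a n‖ := by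
  rw [lp.norm_eq_tsum_rpow (p := 1) (by norm_num) a]
  simp

include hC hCne hperf in
lemma norm_aG_le (a : lp (fun _ : ℕ => ℝ) 1) (n : ℕ) :
    ‖a n • Gf hC hCne hperf n‖ ≤ ‖a n‖ := by
  apply (ContinuousMap.norm_le _ (norm_nonneg (a n))).mpr
  intro x
  rw [ContinuousMap.smul_apply]
  rw [smul_eq_mul, Real.norm_eq_abs, Real.norm_eq_abs, abs_mul]
  calc |a n| * |Gf hC hCne hperf n x| ≤ |a n| * 1 :=
        mul_le_mul_of_nonneg_left (Gf_bd hC hCne hperf n x) (abs_nonneg _)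
    _ = |a n| := mul_one _

include hC hCne hperf in
lemma summable_aG (a : lp (fun _ : ℕ => ℝ) 1) :
    Summable (fun n => a n • Gf hC hCne hperf n) := by
  apply Summable.of_norm
  apply Summable.of_nonneg_of_le (fun n => norm_nonneg _) _ (lp1_summable a)
  intro n
  exact norm_aG_le hC hCne hperf a n

/-- the embedding of ℓ¹ -/
def Jemb (hC : IsClosed C) (hCne : C.Nonempty)
    (hperf : ∀ x ∈ C, (𝓝[C \ {x}] x).NeBot) : lp (fun _ : ℕ => ℝ) 1 →L[ℝ] C(K, ℝ) :=
  LinearMap.mkContinuous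
    { toFun := fun a => ∑' n, a n • Gf hC hCne hperf n
      map_add' := fun a b => by
        have ha := summable_aG hC hCne hperf a
        have hb := summable_aG hC hCne hperf b
        rw [← Summable.tsum_add ha hb]
        apply tsum_congr
        intro n
        rw [lp.coeFn_add]
        simp [add_smul]
      map_smul' := fun r a => by
        have ha := summable_aG hC hCne hperf a
        simp only [RingHom.id_apply]
        rw [← Summable.tsum_const_smul r ha]
        apply tsum_congr
        intro n
        rw [lp.coeFn_smul]
        simp [smul_smul] }
    1
    (fun a => by
      simp only [LinearMap.coe_mk, AddHom.coe_mk, one_mul]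
      calc ‖∑' n, a n • Gf hC hCne hperf n‖ ≤ ∑' n, ‖a n • Gf hC hCne hperf n‖ :=
            norm_tsum_le_tsum_norm (by
              apply Summable.of_nonneg_of_le (fun n => norm_nonneg _) _ (lp1_summable a)
              exact norm_aG_le hC hCne hperf a)
        _ ≤ ∑' n, ‖a n‖ := by
            apply Summable.tsum_le_tsum _ _ (lp1_summable a)
            · exact norm_aG_le hC hCne hperf a
            · apply Summable.of_nonneg_of_le (fun n => norm_nonneg _) _ (lp1_summable a)
              exact norm_aG_le hC hCne hperf a
        _ = ‖a‖ := (lp1_norm a).symm)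

include hC hCne hperf in
lemma Jemb_lower (a : lp (fun _ : ℕ => ℝ) 1) : ‖a‖ ≤ ‖Jemb hC hCne hperf a‖ := by
  set σstar : ℕ → Bool := fun n => decide (0 ≤ a n) with hσ
  set x : K := pt hC hCne hperf σstar with hx
  have heval : (Jemb hC hCne hperf a) x = ∑' n, a n * Gf hC hCne hperf n x := by
    have : Jemb hC hCne hperf a = ∑' n, a n • Gf hC hCne hperf n := rfl
    rw [this]
    have := (ContinuousMap.evalCLM ℝ x).map_tsum (summable_aG hC hCne hperf a)
    simpa using this
  have hGx : ∀ n, Gf hC hCne hperf n x = rad (σstar n) := by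
    intro n
    have hmem : x ∈ tW C (n+1) σstar := pt_mem hC hCne hperf σstar (n+1)
    have := Gf_simple hC hCne hperf n σstar x hmem
    rw [this]
    rfl
  have habs : ∀ n, a n * Gf hC hCne hperf n x = ‖a n‖ := by
    intro n
    rw [hGx n, Real.norm_eq_abs]
    by_cases h : 0 ≤ a n
    · rw [hσ]
      simp only [decide_eq_true h]
      rw [abs_of_nonneg h]
      simp [rad]
    · rw [hσ]
      simp only [decide_eq_false h]
      rw [abs_of_neg (lt_of_not_ge h)]
      simp [rad]
  rw [lp1_norm a]
  calc ∑' n, ‖a n‖ = (Jemb hC hCne hperf a) x := by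
        rw [heval]
        exact tsum_congr fun n => (habs n).symm
    _ ≤ |(Jemb hC hCne hperf a) x| := le_abs_self _
    _ ≤ ‖Jemb hC hCne hperf a‖ := by
        rw [← Real.norm_eq_abs]
        exact (Jemb hC hCne hperf a).norm_coe_le_norm x


include hC hCne hperf in
lemma Gf_simple_at (n : ℕ) {M : ℕ} (h : n < M) :
    IsSimple C (Gf hC hCne hperf n) M (fun σ => rad (σ ⟨n, h⟩)) := by
  have h1 : n + 1 ≤ M := h
  exact isSimple_mono hC hCne hperf h1 (Gf_simple hC hCne hperf n)

/-- coefficients of the candidate operator -/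
def qc (hC : IsClosed C) (hCne : C.Nonempty)
    (hperf : ∀ x ∈ C, (𝓝[C \ {x}] x).NeBot) (F : C(K, ℝ)) (n : ℕ) : ℝ :=
  Lam hC hCne hperf (F * Gf hC hCne hperf n)

include hC hCne hperf in
lemma Lam_G_mul_G (n m : ℕ) :
    Lam hC hCne hperf (Gf hC hCne hperf n * Gf hC hCne hperf m)
      = if n = m then 1 else 0 := by
  set M := max n m + 1 with hM
  have hn : n < M := by omega
  have hm : m < M := by omega
  have hsimp := isSimple_mul (Gf_simple_at hC hCne hperf n hn)
    (Gf_simple_at hC hCne hperf m hm)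
  rw [Lam_simple hC hCne hperf hsimp]
  by_cases h : n = m
  · subst h
    rw [if_pos rfl]
    have : ∀ τ : Fin M → Bool, rad (τ ⟨n, hn⟩) * rad (τ ⟨n, hn⟩) = 1 :=
      fun τ => rad_mul_self _
    rw [Finset.sum_congr rfl (fun τ _ => this τ), Finset.sum_const, Finset.card_univ]
    simp [Fintype.card_fun]
  · rw [if_neg h]
    have hne : (⟨n, hn⟩ : Fin M) ≠ ⟨m, hm⟩ := by
      simp only [ne_eq, Fin.mk.injEq]
      exact h
    rw [sum_rad_mul_rad _ _ hne, zero_div]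

include hC hCne hperf in
lemma bessel (F : C(K, ℝ)) (t : Finset ℕ) :
    ∑ n ∈ t, (qc hC hCne hperf F n) ^ 2 ≤ ‖F‖ ^ 2 := by
  classical
  set c := qc hC hCne hperf F with hc
  set G := Gf hC hCne hperf with hG
  set S : C(K, ℝ) := ∑ n ∈ t, c n • G n with hS
  set Λ := Lam hC hCne hperf with hΛ
  have hexp : (F - S) * (F - S) = F * F - F * S - S * F + S * S := by ring
  have hFS : Λ (F * S) = ∑ n ∈ t, c n ^ 2 := by
    have : F * S = ∑ n ∈ t, c n • (F * G n) := by
      rw [hS, Finset.mul_sum]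
      refine Finset.sum_congr rfl fun n _ => ?_
      rw [mul_smul_comm]
    rw [this, map_sum]
    refine Finset.sum_congr rfl fun n _ => ?_
    rw [map_smul, smul_eq_mul, sq]
    rfl
  have hSF : Λ (S * F) = ∑ n ∈ t, c n ^ 2 := by
    rw [mul_comm]; exact hFS
  have hSS : Λ (S * S) = ∑ n ∈ t, c n ^ 2 := by
    have : S * S = ∑ n ∈ t, ∑ m ∈ t, (c n * c m) • (G n * G m) := by
      rw [hS, Finset.sum_mul_sum]
      refine Finset.sum_congr rfl fun n _ => Finset.sum_congr rfl fun m _ => ?_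
      rw [smul_mul_smul_comm]
    rw [this, map_sum]
    have inner : ∀ n ∈ t, ∑ m ∈ t, Λ ((c n * c m) • (G n * G m)) = c n ^ 2 := by
      intro n hn
      have : ∀ m ∈ t, Λ ((c n * c m) • (G n * G m))
          = if n = m then c n ^ 2 else 0 := by
        intro m _
        rw [map_smul, smul_eq_mul, hΛ, hG, Lam_G_mul_G hC hCne hperf n m]
        by_cases h : n = m
        · subst h; simp [sq]
        · simp [h]
      rw [Finset.sum_congr rfl this, Finset.sum_ite_eq t n (fun _ => c n ^ 2), if_pos hn]
    refine Finset.sum_congr rfl fun n hn => ?_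
    rw [map_sum]
    exact inner n hn
  have hpos : 0 ≤ Λ ((F - S) * (F - S)) := by
    apply Lam_nonneg
    intro x
    rw [ContinuousMap.mul_apply]
    exact mul_self_nonneg _
  have hFF : Λ (F * F) ≤ ‖F‖ ^ 2 := by
    calc Λ (F * F) ≤ |Λ (F * F)| := le_abs_self _
      _ ≤ ‖F * F‖ := Lam_norm_le hC hCne hperf _
      _ ≤ ‖F‖ * ‖F‖ := norm_mul_le F F
      _ = ‖F‖ ^ 2 := (sq ‖F‖).symm
  have hlin : Λ ((F - S) * (F - S)) = Λ (F * F) - ∑ n ∈ t, c n ^ 2 := by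
    rw [hexp, map_add, map_sub, map_sub, hFS, hSF, hSS]
    ring
  linarith [hpos, hFF, hlin]

include hC hCne hperf in
lemma qc_memℓp (F : C(K, ℝ)) : Memℓp (qc hC hCne hperf F) 2 := by
  apply memℓp_gen
  have h2 : (2 : ENNReal).toReal = 2 := by norm_num
  rw [h2]
  have hpt : ∀ n, ‖qc hC hCne hperf F n‖ ^ (2:ℝ) = (qc hC hCne hperf F n) ^ 2 := by
    intro n
    rw [Real.norm_eq_abs, show (2:ℝ) = ((2:ℕ):ℝ) by norm_num, Real.rpow_natCast, sq_abs]
  rw [show (fun n => ‖qc hC hCne hperf F n‖ ^ (2:ℝ)) = fun n => (qc hC hCne hperf F n) ^ 2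
    from funext hpt]
  exact summable_of_sum_le (fun n => sq_nonneg _) (fun u => bessel hC hCne hperf F u)


include hC hCne hperf in
lemma qc_sq_tsum_le (F : C(K, ℝ)) : ∑' n, (qc hC hCne hperf F n) ^ 2 ≤ ‖F‖ ^ 2 := by
  apply Summable.tsum_le_of_sum_le
  · exact summable_of_sum_le (fun n => sq_nonneg _) (fun u => bessel hC hCne hperf F u)
  · exact fun u => bessel hC hCne hperf F u

include hC hCne hperf in
lemma qc_add (F H : C(K, ℝ)) :
    qc hC hCne hperf (F + H) = fun n => qc hC hCne hperf F n + qc hC hCne hperf H n := by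
  funext n
  rw [qc, qc, qc, add_mul, map_add]

include hC hCne hperf in
lemma qc_smul (r : ℝ) (F : C(K, ℝ)) :
    qc hC hCne hperf (r • F) = fun n => r * qc hC hCne hperf F n := by
  funext n
  rw [qc, qc, smul_mul_assoc, map_smul, smul_eq_mul]

/-- the operator into ℓ² -/
def qop (hC : IsClosed C) (hCne : C.Nonempty)
    (hperf : ∀ x ∈ C, (𝓝[C \ {x}] x).NeBot) : C(K, ℝ) →L[ℝ] lp (fun _ : ℕ => ℝ) 2 :=
  LinearMap.mkContinuous
    { toFun := fun F => (⟨qc hC hCne hperf F, qc_memℓp hC hCne hperf F⟩ : lp (fun _ : ℕ => ℝ) 2)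
      map_add' := fun F H => by
        apply lp.ext
        have : (((⟨qc hC hCne hperf F, qc_memℓp hC hCne hperf F⟩ : lp (fun _ : ℕ => ℝ) 2)
            + ⟨qc hC hCne hperf H, qc_memℓp hC hCne hperf H⟩ : lp (fun _ : ℕ => ℝ) 2) : ℕ → ℝ)
            = fun n => qc hC hCne hperf F n + qc hC hCne hperf H n := by
          rw [lp.coeFn_add]; rfl
        rw [this]
        exact qc_add hC hCne hperf F H
      map_smul' := fun r F => by
        apply lp.ext
        have : (((r • ⟨qc hC hCne hperf F, qc_memℓp hC hCne hperf F⟩ : lp (fun _ : ℕ => ℝ) 2))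
            : ℕ → ℝ) = fun n => r * qc hC hCne hperf F n := by
          rw [lp.coeFn_smul]; rfl
        rw [RingHom.id_apply, this]
        exact qc_smul hC hCne hperf r F }
    1
    (fun F => by
      simp only [LinearMap.coe_mk, AddHom.coe_mk, one_mul]
      have h2 : ((2:ENNReal)).toReal = 2 := by norm_num
      have hnn : (0:ℝ) ≤ ‖F‖ := norm_nonneg F
      have hrw := lp.norm_rpow_eq_tsum (p := 2) (by norm_num)
        (⟨qc hC hCne hperf F, qc_memℓp hC hCne hperf F⟩ : lp (fun _ : ℕ => ℝ) 2)
      rw [h2] at hrw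
      have htsum : ∑' n, ‖qc hC hCne hperf F n‖ ^ (2:ℝ) = ∑' n, (qc hC hCne hperf F n) ^ 2 := by
        apply tsum_congr
        intro n
        rw [Real.norm_eq_abs, show (2:ℝ) = ((2:ℕ):ℝ) by norm_num, Real.rpow_natCast, sq_abs]
      have hle : ‖(⟨qc hC hCne hperf F, qc_memℓp hC hCne hperf F⟩ : lp (fun _ : ℕ => ℝ) 2)‖ ^ (2:ℝ)
          ≤ ‖F‖ ^ (2:ℝ) := by
        rw [hrw, htsum]
        rw [show ‖F‖ ^ (2:ℝ) = ‖F‖ ^ 2 by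
          rw [show (2:ℝ) = ((2:ℕ):ℝ) by norm_num, Real.rpow_natCast]]
        exact qc_sq_tsum_le hC hCne hperf F
      have hq : (0:ℝ) ≤ ‖(⟨qc hC hCne hperf F, qc_memℓp hC hCne hperf F⟩
          : lp (fun _ : ℕ => ℝ) 2)‖ := norm_nonneg _
      have hle' : ‖(⟨qc hC hCne hperf F, qc_memℓp hC hCne hperf F⟩ : lp (fun _ : ℕ => ℝ) 2)‖ ^ (2:ℕ)
          ≤ ‖F‖ ^ (2:ℕ) := by
        have e1 := Real.rpow_natCast ‖(⟨qc hC hCne hperf F, qc_memℓp hC hCne hperf F⟩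
          : lp (fun _ : ℕ => ℝ) 2)‖ 2
        have e2 := Real.rpow_natCast ‖F‖ 2
        rw [show ((2:ℕ):ℝ) = (2:ℝ) by norm_num] at e1 e2
        rw [← e1, ← e2]
        exact hle
      exact (pow_le_pow_iff_left₀ hq hnn (by norm_num)).mp hle')

lemma qop_apply (F : C(K, ℝ)) (n : ℕ) :
    (qop hC hCne hperf F : ℕ → ℝ) n = qc hC hCne hperf F n := rfl


lemma sign_mul_self (x : ℝ) : Real.sign x * x = |x| := by
  rcases lt_trichotomy x 0 with h|h|h
  · rw [Real.sign_of_neg h, abs_of_neg h]; ring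
  · rw [h]; simp
  · rw [Real.sign_of_pos h, abs_of_pos h]; ring

lemma abs_sign_le (x : ℝ) : |Real.sign x| ≤ 1 := by
  rcases lt_trichotomy x 0 with h|h|h
  · rw [Real.sign_of_neg h]; norm_num
  · rw [h]; simp
  · rw [Real.sign_of_pos h]; norm_num

include hC hCne hperf in
lemma exists_simple_fn (N : ℕ) (c : (Fin N → Bool) → ℝ) (hc : ∀ τ, |c τ| ≤ 1) :
    ∃ F : C(K, ℝ), ‖F‖ ≤ 1 ∧ IsSimple C F N c := by
  classical
  set A : (Fin N → Bool) → Set K := fun τ => tW C N (extb τ) with hA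
  have hdisj : ∀ τ ρ : Fin N → Bool, τ ≠ ρ → A τ ∩ A ρ = ∅ := by
    intro τ ρ hne
    obtain ⟨i, hi⟩ := Function.ne_iff.mp hne
    apply tW_disjoint hC hCne hperf
    refine ⟨i.val, i.isLt, ?_⟩
    rw [extb_lt τ i.isLt, extb_lt ρ i.isLt]
    simpa using hi
  have hu : ∀ τ : Fin N → Bool, ∃ u : C(K, ℝ),
      Set.EqOn (⇑u) 0 (⋃ ρ ∈ Finset.univ.erase τ, A ρ) ∧ Set.EqOn (⇑u) 1 (A τ) ∧
        ∀ x, u x ∈ Set.Icc (0:ℝ) 1 := by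
    intro τ
    apply exists_continuous_zero_one_of_isClosed
    · exact Set.Finite.isClosed_biUnion (Finset.finite_toSet _) (fun ρ _ => tW_closed _ _)
    · exact tW_closed _ _
    · rw [Set.disjoint_iff_inter_eq_empty]
      apply Set.eq_empty_of_forall_notMem
      rintro x ⟨hx1, hx2⟩
      simp only [Set.mem_iUnion, Finset.mem_coe, Finset.mem_erase] at hx1
      obtain ⟨ρ, ⟨hρne, _⟩, hxρ⟩ := hx1
      exact Set.eq_empty_iff_forall_notMem.mp (hdisj ρ τ hρne) x ⟨hxρ, hx2⟩
  choose u hu0 hu1 huI using hu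
  set F0 : C(K, ℝ) := ∑ τ : Fin N → Bool, c τ • u τ with hF0
  have hF0val : ∀ (σ : ℕ → Bool) (x : K), x ∈ tW C N σ → F0 x = c (resb N σ) := by
    intro σ x hx
    have hxA : x ∈ A (resb N σ) := by
      show x ∈ tW C N (extb (resb N σ))
      have heq : tW C N σ = tW C N (extb (resb N σ)) := by
        apply tW_congr
        intro i hi
        rw [extb_lt _ hi]; rfl
      rw [← heq]
      exact hx
    have hFeval : F0 x = ∑ τ : Fin N → Bool, c τ * u τ x := by
      rw [hF0]
      rw [ContinuousMap.coe_sum]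
      rw [Finset.sum_apply]
      exact Finset.sum_congr rfl fun τ _ => by simp
    rw [hFeval]
    rw [Finset.sum_eq_single (resb N σ)]
    · rw [hu1 (resb N σ) hxA]
      simp
    · intro τ _ hτne
      have : x ∈ ⋃ ρ ∈ Finset.univ.erase τ, A ρ := by
        simp only [Set.mem_iUnion, Finset.mem_coe, Finset.mem_erase]
        exact ⟨resb N σ, ⟨(Ne.symm hτne), Finset.mem_univ _⟩, hxA⟩
      rw [hu0 τ this]
      simp
    · intro h
      exact absurd (Finset.mem_univ _) h
  refine ⟨ContinuousMap.mk (fun x => max (-1) (min 1 (F0 x)))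
    (Continuous.max continuous_const (Continuous.min continuous_const F0.continuous)), ?_, ?_⟩
  · apply (ContinuousMap.norm_le _ (by norm_num : (0:ℝ) ≤ 1)).mpr
    intro x
    rw [ContinuousMap.coe_mk, Real.norm_eq_abs, abs_le]
    constructor
    · exact le_max_left _ _
    · exact max_le (by norm_num) (min_le_left _ _)
  · intro σ x hx
    rw [ContinuousMap.coe_mk]
    rw [hF0val σ x hx]
    have h1 := (abs_le.mp (hc (resb N σ))).1
    have h2 := (abs_le.mp (hc (resb N σ))).2
    rw [min_eq_right h2, max_eq_right h1]

include hC hCne hperf in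
lemma key_estimate (y : lp (fun _ : ℕ => ℝ) 2) (N : ℕ) :
    ∃ F : C(K, ℝ), ‖F‖ ≤ 1 ∧
      Real.sqrt (∑ i : Fin N, (y i)^2) ≤
        Real.sqrt 3 * inner ℝ y (qop hC hCne hperf F) := by
  classical
  set yv : Fin N → ℝ := fun i => y i.val with hyv
  set c : (Fin N → Bool) → ℝ := fun τ => Real.sign (RS yv τ) with hcdef
  obtain ⟨F, hFnorm, hFsimple⟩ := exists_simple_fn hC hCne hperf N c (fun τ => abs_sign_le _)
  refine ⟨F, hFnorm, ?_⟩
  -- vanishing of high coefficients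
  have hhigh : ∀ n, N ≤ n → qc hC hCne hperf F n = 0 := by
    intro n hn
    have hNn : N ≤ n + 1 := le_trans hn (Nat.le_succ n)
    have hFsimple' := isSimple_mono hC hCne hperf hNn hFsimple
    have hGn := Gf_simple_at hC hCne hperf n (Nat.lt_succ_self n)
    have hprod := isSimple_mul hFsimple' hGn
    have hflip : ∀ σ : Fin (n+1) → Bool,
        (c fun i => flip ⟨n, Nat.lt_succ_self n⟩ σ (Fin.castLE hNn i))
            * rad (flip ⟨n, Nat.lt_succ_self n⟩ σ ⟨n, Nat.lt_succ_self n⟩)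
          = - ((c fun i => σ (Fin.castLE hNn i)) * rad (σ ⟨n, Nat.lt_succ_self n⟩)) := by
      intro σ
      have h1 : (fun i : Fin N => flip ⟨n, Nat.lt_succ_self n⟩ σ (Fin.castLE hNn i))
          = fun i : Fin N => σ (Fin.castLE hNn i) := by
        funext i
        apply flip_apply_ne
        simp only [ne_eq, Fin.ext_iff, Fin.coe_castLE]
        omega
      rw [h1, rad_flip_same]
      ring
    rw [qc, Lam_simple hC hCne hperf hprod,
      sum_eq_zero_of_flip ⟨n, Nat.lt_succ_self n⟩ _ hflip, zero_div]
  -- low coefficients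
  have hlow : ∀ (n : Fin N), qc hC hCne hperf F n.val
      = (∑ σ : Fin N → Bool, c σ * rad (σ n)) / 2 ^ N := by
    intro n
    have hGn := Gf_simple_at hC hCne hperf n.val (n.isLt)
    have hprod := isSimple_mul hFsimple hGn
    rw [qc, Lam_simple hC hCne hperf hprod]
  -- the finite sum identity
  have hkey : ∑ n : Fin N, yv n * qc hC hCne hperf F n.val
      = (∑ σ : Fin N → Bool, |RS yv σ|) / 2 ^ N := by
    rw [Finset.sum_congr rfl (fun n _ => by rw [hlow n])]
    rw [show ∑ n : Fin N, yv n * ((∑ σ : Fin N → Bool, c σ * rad (σ n)) / 2 ^ N)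
        = (∑ n : Fin N, ∑ σ : Fin N → Bool, yv n * (c σ * rad (σ n))) / 2 ^ N by
      rw [Finset.sum_div]
      exact Finset.sum_congr rfl fun n _ => by rw [← Finset.mul_sum, mul_div_assoc]]
    congr 1
    rw [Finset.sum_comm]
    refine Finset.sum_congr rfl fun σ _ => ?_
    have : ∑ n : Fin N, yv n * (c σ * rad (σ n)) = c σ * RS yv σ := by
      rw [RS, Finset.mul_sum]
      exact Finset.sum_congr rfl fun n _ => by ring
    rw [this, hcdef, sign_mul_self]
  -- khintchine
  have hkh := khintchine yv
  -- inner product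
  have hinner : (inner ℝ y (qop hC hCne hperf F) : ℝ)
      = ∑ n : Fin N, yv n * qc hC hCne hperf F n.val := by
    rw [lp.inner_eq_tsum]
    have hz : ∀ n ∉ Finset.range N, (inner ℝ (y n) ((qop hC hCne hperf F : ℕ → ℝ) n) : ℝ) = 0 := by
      intro n hn
      rw [Finset.mem_range, not_lt] at hn
      rw [qop_apply, hhigh n hn]
      simp
    rw [tsum_eq_sum hz, ← Fin.sum_univ_eq_sum_range]
    refine Finset.sum_congr rfl fun n _ => ?_
    rw [qop_apply]
    rw [show (inner ℝ (y n.val) (qc hC hCne hperf F n.val) : ℝ)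
      = y n.val * qc hC hCne hperf F n.val by simp [mul_comm]]
  rw [hinner]
  calc Real.sqrt (∑ i : Fin N, (y i)^2)
      = Real.sqrt (∑ i : Fin N, (yv i)^2) := rfl
    _ ≤ Real.sqrt 3 * ((∑ σ : Fin N → Bool, |RS yv σ|) / 2 ^ N) := by
        have h2N : (0:ℝ) < 2 ^ N := by positivity
        rw [show Real.sqrt 3 * ((∑ σ : Fin N → Bool, |RS yv σ|) / 2 ^ N)
          = (Real.sqrt 3 * ∑ σ : Fin N → Bool, |RS yv σ|) / 2 ^ N by ring]
        rw [le_div_iff₀ h2N]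
        linarith [hkh]
    _ = Real.sqrt 3 * ∑ n : Fin N, yv n * qc hC hCne hperf F n.val := by rw [hkey]


include hC hCne hperf in
lemma mem_closure_of_small {b : lp (fun _ : ℕ => ℝ) 2} (hb : ‖b‖ < (Real.sqrt 3)⁻¹) :
    b ∈ closure ((qop hC hCne hperf) '' closedBall 0 1) := by
  by_contra hb'
  set A := closure ((qop hC hCne hperf) '' closedBall 0 1) with hA
  have hconv : Convex ℝ A :=
    ((convex_closedBall (0 : C(K,ℝ)) 1).linear_image (qop hC hCne hperf).toLinearMap).closure
  obtain ⟨f, u, hfa, hub⟩ := geometric_hahn_banach_closed_point hconv isClosed_closure hb'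
  have h0A : (0 : lp (fun _ : ℕ => ℝ) 2) ∈ A :=
    subset_closure ⟨0, mem_closedBall_self (by norm_num), map_zero _⟩
  have hupos : 0 < u := by
    have := hfa 0 h0A
    rwa [map_zero] at this
  set y := (InnerProductSpace.toDual ℝ (lp (fun _ : ℕ => ℝ) 2)).symm f with hy
  have hyf : ∀ z, (inner ℝ y z : ℝ) = f z := fun z => InnerProductSpace.toDual_symm_apply
  have hsqrt3 : (0:ℝ) < Real.sqrt 3 := Real.sqrt_pos.mpr (by norm_num)
  have hN : ∀ N : ℕ, Real.sqrt (∑ i : Fin N, (y i)^2) ≤ Real.sqrt 3 * u := by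
    intro N
    obtain ⟨F, hFnorm, hFest⟩ := key_estimate hC hCne hperf y N
    have hFA : qop hC hCne hperf F ∈ A := by
      apply subset_closure
      exact ⟨F, by rwa [mem_closedBall_iff_norm, sub_zero], rfl⟩
    have hlt : (inner ℝ y (qop hC hCne hperf F) : ℝ) < u := by
      rw [hyf]; exact hfa _ hFA
    calc Real.sqrt (∑ i : Fin N, (y i)^2)
        ≤ Real.sqrt 3 * inner ℝ y (qop hC hCne hperf F) := hFest
      _ ≤ Real.sqrt 3 * u := mul_le_mul_of_nonneg_left hlt.le hsqrt3.le
  -- limit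
  have hynorm : ‖y‖ ≤ Real.sqrt 3 * u := by
    have hhs := lp.hasSum_norm (p := 2) (by norm_num) y
    have h2 : ((2:ENNReal)).toReal = 2 := by norm_num
    rw [h2] at hhs
    have htend := hhs.tendsto_sum_nat
    have hconv2 : ∀ n : ℕ, ∑ i ∈ Finset.range n, ‖y i‖ ^ (2:ℝ) = ∑ i : Fin n, (y i)^2 := by
      intro n
      rw [← Fin.sum_univ_eq_sum_range]
      refine Finset.sum_congr rfl fun i _ => ?_
      rw [Real.norm_eq_abs, show (2:ℝ) = ((2:ℕ):ℝ) by norm_num, Real.rpow_natCast, sq_abs]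
    have htend2 : Tendsto (fun n : ℕ => Real.sqrt (∑ i : Fin n, (y i)^2)) atTop
        (𝓝 (Real.sqrt (‖y‖ ^ (2:ℝ)))) := by
      apply (Real.continuous_sqrt.tendsto _).comp
      apply Tendsto.congr (fun n => hconv2 n) htend
    have hnorm_eq : Real.sqrt (‖y‖ ^ (2:ℝ)) = ‖y‖ := by
      rw [show (2:ℝ) = ((2:ℕ):ℝ) by norm_num, Real.rpow_natCast]
      exact Real.sqrt_sq (norm_nonneg y)
    rw [hnorm_eq] at htend2
    exact le_of_tendsto htend2 (Filter.Eventually.of_forall hN)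
  -- contradiction
  have hfb : f b < u := by
    rw [← hyf]
    calc (inner ℝ y b : ℝ) ≤ ‖y‖ * ‖b‖ := real_inner_le_norm y b
      _ ≤ (Real.sqrt 3 * u) * ‖b‖ := mul_le_mul_of_nonneg_right hynorm (norm_nonneg b)
      _ < (Real.sqrt 3 * u) * (Real.sqrt 3)⁻¹ := by
          apply mul_lt_mul_of_pos_left hb
          positivity
      _ = u := by field_simp
  exact absurd hub (not_lt.mpr hfb.le)

include hC hCne hperf in
lemma approx_sol (b : lp (fun _ : ℕ => ℝ) 2) {ε : ℝ} (hε : 0 < ε) :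
    ∃ F : C(K, ℝ), ‖F‖ ≤ 2 * Real.sqrt 3 * ‖b‖ ∧ ‖qop hC hCne hperf F - b‖ ≤ ε := by
  by_cases hb : b = 0
  · exact ⟨0, by simp [hb], by simp [hb, hε.le]⟩
  have hbn : 0 < ‖b‖ := norm_pos_iff.mpr hb
  have hsqrt3 : (0:ℝ) < Real.sqrt 3 := Real.sqrt_pos.mpr (by norm_num)
  set s : ℝ := 2 * Real.sqrt 3 * ‖b‖ with hs
  have hspos : 0 < s := by positivity
  set z : lp (fun _ : ℕ => ℝ) 2 := s⁻¹ • b with hz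
  have hzn : ‖z‖ < (Real.sqrt 3)⁻¹ := by
    have he : ‖z‖ = ‖s⁻¹‖ * ‖b‖ := by rw [hz]; exact norm_smul s⁻¹ b
    rw [he, Real.norm_eq_abs, abs_of_pos (inv_pos.mpr hspos), hs]
    rw [show (2 * Real.sqrt 3 * ‖b‖)⁻¹ * ‖b‖ = (2 * Real.sqrt 3)⁻¹ by field_simp]
    have h1 : Real.sqrt 3 < 2 * Real.sqrt 3 := by linarith
    exact inv_strictAnti₀ hsqrt3 h1
  have hzA := mem_closure_of_small hC hCne hperf hzn
  rw [Metric.mem_closure_iff] at hzA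
  obtain ⟨a, ha, hdist⟩ := hzA (ε / s) (div_pos hε hspos)
  obtain ⟨F', hF', rfl⟩ := ha
  rw [mem_closedBall_iff_norm, sub_zero] at hF'
  refine ⟨s • F', ?_, ?_⟩
  · have he : ‖s • F'‖ = ‖s‖ * ‖F'‖ := norm_smul s F'
    rw [he, Real.norm_eq_abs, abs_of_pos hspos]
    calc s * ‖F'‖ ≤ s * 1 := mul_le_mul_of_nonneg_left hF' hspos.le
      _ = s := mul_one s
  · have hqb : b = s • z := by
      rw [hz, smul_smul, mul_inv_cancel₀ (ne_of_gt hspos), one_smul]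
    rw [map_smul, hqb, ← smul_sub]
    have he2 : ‖s • (qop hC hCne hperf F' - z)‖ = ‖s‖ * ‖qop hC hCne hperf F' - z‖ :=
      norm_smul s (qop hC hCne hperf F' - z)
    rw [he2, Real.norm_eq_abs, abs_of_pos hspos]
    rw [dist_comm, dist_eq_norm] at hdist
    calc s * ‖qop hC hCne hperf F' - z‖ ≤ s * (ε / s) :=
          mul_le_mul_of_nonneg_left hdist.le hspos.le
      _ = ε := by field_simp

/-- iteration: approximation with norm control gives surjectivity -/
lemma surjective_of_approx {X Y : Type} [NormedAddCommGroup X] [NormedSpace ℝ X]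
    [CompleteSpace X] [NormedAddCommGroup Y] [NormedSpace ℝ Y] (T : X →L[ℝ] Y) (M : ℝ)
    (hM : 0 ≤ M) (h : ∀ b : Y, ∀ ε > (0:ℝ), ∃ x, ‖x‖ ≤ M * ‖b‖ ∧ ‖T x - b‖ ≤ ε) :
    Function.Surjective T := by
  have hg : ∀ z : Y, ∃ x, ‖x‖ ≤ M * ‖z‖ ∧ ‖T x - z‖ ≤ ‖z‖ / 2 := by
    intro z
    by_cases hz : z = 0
    · exact ⟨0, by simp [hz], by simp [hz]⟩
    · exact h z (‖z‖ / 2) (div_pos (norm_pos_iff.mpr hz) two_pos)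
  choose g hg1 hg2 using hg
  intro b
  set seq : ℕ → Y := fun k => Nat.rec b (fun _ z => z - T (g z)) k with hseq
  have hseq0 : seq 0 = b := rfl
  have hseqS : ∀ k, seq (k+1) = seq k - T (g (seq k)) := fun k => rfl
  have hnorm : ∀ k, ‖seq k‖ ≤ ‖b‖ / 2 ^ k := by
    intro k
    induction k with
    | zero => simp [hseq0]
    | succ k ih =>
      rw [hseqS k, norm_sub_rev]
      calc ‖T (g (seq k)) - seq k‖ ≤ ‖seq k‖ / 2 := hg2 (seq k)
        _ ≤ (‖b‖ / 2 ^ k) / 2 := by linarith [ih]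
        _ = ‖b‖ / 2 ^ (k+1) := by ring
  have hsum : Summable (fun k => g (seq k)) := by
    apply Summable.of_norm
    refine Summable.of_nonneg_of_le (fun k => norm_nonneg _) (fun k => ?_)
      ((summable_geometric_of_lt_one (r := 1/2) (by norm_num) (by norm_num)).mul_left (M * ‖b‖))
    calc ‖g (seq k)‖ ≤ M * ‖seq k‖ := hg1 (seq k)
      _ ≤ M * (‖b‖ / 2 ^ k) := mul_le_mul_of_nonneg_left (hnorm k) hM
      _ = (M * ‖b‖) * (1/2) ^ k := by
          rw [div_pow, one_pow]; ring
  refine ⟨∑' k, g (seq k), ?_⟩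
  rw [T.map_tsum hsum]
  have hTsum : Summable (fun k => T (g (seq k))) :=
    hsum.map T.toLinearMap.toAddMonoidHom T.continuous
  have htel : ∀ k, T (g (seq k)) = seq k - seq (k+1) := by
    intro k
    rw [hseqS k, sub_sub_cancel]
  have hseq_tend : Tendsto (fun n => seq n) atTop (𝓝 0) := by
    apply squeeze_zero_norm hnorm
    have : Tendsto (fun n : ℕ => ‖b‖ * (1/2 : ℝ) ^ n) atTop (𝓝 (‖b‖ * 0)) :=
      (tendsto_pow_atTop_nhds_zero_of_lt_one (by norm_num) (by norm_num)).const_mul _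
    rw [mul_zero] at this
    apply Tendsto.congr _ this
    intro n
    rw [div_pow, one_pow]
    ring
  have htend : Tendsto (fun n => ∑ k ∈ Finset.range n, T (g (seq k))) atTop (𝓝 b) := by
    have heq : ∀ n, ∑ k ∈ Finset.range n, T (g (seq k)) = b - seq n := by
      intro n
      rw [Finset.sum_congr rfl (fun k _ => htel k), Finset.sum_range_sub' seq n, hseq0]
    rw [show (𝓝 b) = 𝓝 (b - 0) by rw [sub_zero]]
    apply Tendsto.congr (fun n => (heq n).symm)
    exact tendsto_const_nhds.sub hseq_tend
  exact ((hTsum.hasSum_iff_tendsto_nat).mpr htend).tsum_eq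

end
end CKl1l2


/-- if `K` is not scattered, `C(K)` contains an isomorphic copy of `ℓ¹` and
there is a bounded surjection from `C(K)` onto `ℓ²`. -/
theorem copy_of_ell1_and_surjection_onto_ell2 (K : Type) [TopologicalSpace K] [CompactSpace K]
    [T2Space K] (hK : ¬ Scattered K) :
    (∃ J : lp (fun _ : ℕ => ℝ) 1 →L[ℝ] C(K, ℝ), ∃ c > (0 : ℝ), ∀ x, c * ‖x‖ ≤ ‖J x‖) ∧
      ∃ q : C(K, ℝ) →L[ℝ] lp (fun _ : ℕ => ℝ) 2, Function.Surjective q := by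
  unfold Scattered at hK
  push_neg at hK
  obtain ⟨C, hC, hCne, hperf'⟩ := hK
  have hperf : ∀ x ∈ C, (𝓝[C \ {x}] x).NeBot := fun x hx => hperf' x hx
  constructor
  · exact ⟨CKl1l2.Jemb hC hCne hperf, 1, one_pos, fun a => by
      rw [one_mul]; exact CKl1l2.Jemb_lower hC hCne hperf a⟩
  · refine ⟨CKl1l2.qop hC hCne hperf, ?_⟩
    apply CKl1l2.surjective_of_approx _ (2 * Real.sqrt 3) (by positivity)
    intro b ε hε
    exact CKl1l2.approx_sol hC hCne hperf b hε
end

section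
/- Let E be a Banach space such that (i) every bounded linear operator from E into E* is completely continuous, (ii) E does not have the Schur property, and (iii) E contains an isomorphic copy of ℓ¹. Then E ⊗̂ E does not have the Dunford–Pettis property. -/
open Filter Topology Metric

open scoped ENNReal NNReal
open RealInnerProductSpace

section Aux

noncomputable abbrev L1 := lp (fun _ : ℕ => ℝ) 1

-- A1: sign functionals, via Hahn-Banach
lemma exists_sign_functional {E : Type} [NormedAddCommGroup E] [NormedSpace ℝ E]
    (J : L1 →L[ℝ] E) {c : ℝ} (hc0 : 0 < c) (hc : ∀ v, c * ‖v‖ ≤ ‖J v‖)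
    (w : ℕ → ℝ) (hw : ∀ j, |w j| ≤ 1) (m : ℕ) :
    ∃ ψ : E →L[ℝ] ℝ, ‖ψ‖ ≤ 1/c ∧ ∀ v : L1, ψ (J v) = ∑ j ∈ Finset.range m, w j * v j := by
  classical
  have hnorm1 : ∀ v : L1, HasSum (fun i => ‖v i‖) ‖v‖ := by
    intro v
    have := lp.hasSum_norm (p := 1) (by norm_num) v
    simpa using this
  set u : L1 →ₗ[ℝ] ℝ :=
    { toFun := fun v => ∑ j ∈ Finset.range m, w j * v j
      map_add' := by
        intro v v'
        simp [lp.coeFn_add, Pi.add_apply, mul_add, Finset.sum_add_distrib]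
      map_smul' := by
        intro r v
        simp only [lp.coeFn_smul, Pi.smul_apply, smul_eq_mul, RingHom.id_apply, Finset.mul_sum]
        exact Finset.sum_congr rfl (fun j _ => by ring) } with hu
  have hub : ∀ v : L1, |u v| ≤ ‖v‖ := by
    intro v
    calc |∑ j ∈ Finset.range m, w j * v j| ≤ ∑ j ∈ Finset.range m, |w j * v j| :=
          Finset.abs_sum_le_sum_abs _ _
      _ ≤ ∑ j ∈ Finset.range m, ‖v j‖ := by
          refine Finset.sum_le_sum fun j _ => ?_
          rw [abs_mul]
          have h1 : |w j| * |v j| ≤ 1 * |v j| :=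
            mul_le_mul_of_nonneg_right (hw j) (abs_nonneg _)
          simpa using h1
      _ ≤ ‖v‖ := sum_le_hasSum _ (fun i _ => norm_nonneg _) (hnorm1 v)
  have Jinj : Function.Injective (J.toLinearMap) := by
    intro a b hab
    have h0 : J (a - b) = 0 := by
      have : J a = J b := hab
      simp [map_sub, this]
    have h1 := hc (a - b)
    rw [h0, norm_zero] at h1
    have h2 : ‖a - b‖ = 0 := by nlinarith [norm_nonneg (a - b)]
    have := norm_eq_zero.mp h2
    exact sub_eq_zero.mp this
  set p : Submodule ℝ E := LinearMap.range J.toLinearMap with hp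
  set eqv : L1 ≃ₗ[ℝ] p := LinearEquiv.ofInjective J.toLinearMap Jinj with heqv
  set f₀ : p →ₗ[ℝ] ℝ := u.comp eqv.symm.toLinearMap with hf₀
  have hbound : ∀ z : p, ‖f₀ z‖ ≤ (1/c) * ‖z‖ := by
    intro z
    set v : L1 := eqv.symm z with hv
    have hz : (z : E) = J v := by
      have : eqv v = z := eqv.apply_symm_apply z
      have h2 : ((eqv v : p) : E) = J v := rfl
      rw [this] at h2
      exact h2
    have h3 : ‖(z : E)‖ = ‖z‖ := rfl
    have h4 : c * ‖v‖ ≤ ‖z‖ := by rw [← h3, hz]; exact hc v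
    have h5 : ‖f₀ z‖ = |u v| := rfl
    have h6 : |u v| ≤ ‖v‖ := hub v
    rw [h5]
    calc |u v| ≤ ‖v‖ := h6
      _ ≤ (1/c) * ‖z‖ := by
          rw [div_mul_eq_mul_div, le_div_iff₀ hc0]
          linarith [h4]
  set f : p →L[ℝ] ℝ := f₀.mkContinuous (1/c) hbound with hf
  obtain ⟨g, hg, hgnorm⟩ := exists_extension_norm_eq p f
  refine ⟨g, ?_, ?_⟩
  · rw [hgnorm]
    exact f₀.mkContinuous_norm_le (by positivity) hbound
  · intro v
    have hmem : J v ∈ p := ⟨v, rfl⟩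
    have h7 : g (J v) = f ⟨J v, hmem⟩ := hg ⟨J v, hmem⟩
    have h8 : f ⟨J v, hmem⟩ = u (eqv.symm ⟨J v, hmem⟩) := rfl
    have h9 : eqv v = ⟨J v, hmem⟩ := by
      apply Subtype.ext
      rfl
    rw [h7, h8, ← h9, eqv.symm_apply_apply]
    rfl

lemma sign_orth {m : ℕ} (k l : Fin m) (hkl : k ≠ l) :
    ∑ σ : Fin m → Bool, (if σ k then (1:ℝ) else -1) * (if σ l then (1:ℝ) else -1) = 0 := by
  classical
  refine Finset.sum_involution (fun σ _ => Function.update σ k (!σ k)) ?_ ?_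
    (fun _ _ => Finset.mem_univ _) ?_
  · intro σ _
    show ((if σ k then (1:ℝ) else -1) * (if σ l then (1:ℝ) else -1)) +
      ((if Function.update σ k (!σ k) k then (1:ℝ) else -1) *
       (if Function.update σ k (!σ k) l then (1:ℝ) else -1)) = 0
    rw [Function.update_self, Function.update_of_ne (Ne.symm hkl)]
    cases σ k <;> cases σ l <;> norm_num
  · intro σ _ _ hcontra
    have h1 : Function.update σ k (!σ k) = σ := hcontra
    have h2 := congrFun h1 k
    rw [Function.update_self] at h2
    cases h : σ k <;> rw [h] at h2 <;> simp at h2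
  · intro σ _
    show Function.update (Function.update σ k (!σ k)) k (!Function.update σ k (!σ k) k) = σ
    rw [Function.update_self]
    funext j
    by_cases hj : j = k
    · subst hj; simp [Function.update_self]
    · simp [Function.update_of_ne hj]

-- Bessel for the finite sign system
lemma bessel_finite {m : ℕ} (V : (Fin m → Bool) → ℝ) :
    ∑ k : Fin m, ((2^m : ℝ)⁻¹ * ∑ σ : Fin m → Bool, (if σ k then (1:ℝ) else -1) * V σ)^2
      ≤ (2^m : ℝ)⁻¹ * ∑ σ : Fin m → Bool, (V σ)^2 := by
  classical
  have hcardN : (Fintype.card (Fin m → Bool) : ℝ) = 2^m := by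
    simp [Fintype.card_fun]
  have h2pos : (0:ℝ) < 2^m := by positivity
  set s : ℝ := Real.sqrt (2^m) with hs
  have hs2 : s * s = 2^m := Real.mul_self_sqrt h2pos.le
  have hspos : 0 < s := Real.sqrt_pos.mpr h2pos
  set W : Fin m → EuclideanSpace ℝ (Fin m → Bool) :=
    fun k => WithLp.toLp 2 (fun σ => (if σ k then (1:ℝ) else -1) / s) with hW
  set Vv : EuclideanSpace ℝ (Fin m → Bool) := WithLp.toLp 2 (fun σ => V σ) with hV
  have hinner : ∀ k l : Fin m, ⟪W k, W l⟫ =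
      (s*s)⁻¹ * ∑ σ : Fin m → Bool, (if σ k then (1:ℝ) else -1) * (if σ l then (1:ℝ) else -1) := by
    intro k l
    rw [PiLp.inner_apply, Finset.mul_sum]
    refine Finset.sum_congr rfl fun σ _ => ?_
    simp only [RCLike.inner_apply, conj_trivial, hW]
    field_simp
  have horth : Orthonormal ℝ W := by
    rw [orthonormal_iff_ite]
    intro k l
    by_cases hkl : k = l
    · subst hkl
      rw [if_pos rfl, hinner]
      have hone : ∑ σ : Fin m → Bool, (if σ k then (1:ℝ) else -1) * (if σ k then (1:ℝ) else -1)
          = 2^m := by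
        have hterm : ∀ σ : Fin m → Bool,
            (if σ k then (1:ℝ) else -1) * (if σ k then (1:ℝ) else -1) = 1 := by
          intro σ; cases σ k <;> norm_num
        rw [Finset.sum_congr rfl (fun σ _ => hterm σ)]
        simp [Fintype.card_fun]
      rw [hone, hs2]
      field_simp
    · rw [if_neg hkl, hinner, sign_orth k l hkl, mul_zero]
  have hbessel := horth.sum_inner_products_le (s := Finset.univ) Vv
  have hnorm : ‖Vv‖^2 = ∑ σ : Fin m → Bool, (V σ)^2 := by
    rw [← real_inner_self_eq_norm_sq, PiLp.inner_apply]
    refine Finset.sum_congr rfl fun σ _ => ?_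
    simp [hV, sq]
  have hterm : ∀ k : Fin m, ‖⟪W k, Vv⟫‖^2 =
      (2^m : ℝ) * ((2^m : ℝ)⁻¹ * ∑ σ : Fin m → Bool, (if σ k then (1:ℝ) else -1) * V σ)^2 := by
    intro k
    have hinn2 : ⟪W k, Vv⟫ = s⁻¹ * ∑ σ : Fin m → Bool, (if σ k then (1:ℝ) else -1) * V σ := by
      rw [PiLp.inner_apply, Finset.mul_sum]
      refine Finset.sum_congr rfl fun σ _ => ?_
      simp only [RCLike.inner_apply, conj_trivial, hW, hV]
      field_simp
    rw [hinn2, Real.norm_eq_abs, sq_abs, mul_pow, mul_pow]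
    have h1 : (s⁻¹)^2 = (2^m : ℝ)⁻¹ := by
      rw [← hs2]; rw [sq]; rw [mul_inv]
    have h3 : (2^m : ℝ) * ((2^m : ℝ)⁻¹^2) = (2^m : ℝ)⁻¹ := by
      rw [sq]; rw [← mul_assoc]; field_simp
    rw [h1, ← mul_assoc, h3]
  calc ∑ k : Fin m, ((2^m : ℝ)⁻¹ * ∑ σ : Fin m → Bool, (if σ k then (1:ℝ) else -1) * V σ)^2
      = (2^m : ℝ)⁻¹ * ∑ k : Fin m, ‖⟪W k, Vv⟫‖^2 := by
        rw [Finset.mul_sum]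
        refine Finset.sum_congr rfl fun k _ => ?_
        rw [hterm k, ← mul_assoc]
        have h4 : (2^m : ℝ)⁻¹ * (2^m : ℝ) = 1 := by field_simp
        rw [h4, one_mul]
    _ ≤ (2^m : ℝ)⁻¹ * ‖Vv‖^2 := mul_le_mul_of_nonneg_left hbessel (by positivity)
    _ = (2^m : ℝ)⁻¹ * ∑ σ : Fin m → Bool, (V σ)^2 := by rw [hnorm]

lemma exists_ulim (f : ℕ → ℝ) (M : ℝ) (hb : ∀ m, |f m| ≤ M) :
    ∃ l, Tendsto f (Filter.hyperfilter ℕ : Filter ℕ) (𝓝 l) := by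
  set U := (Filter.hyperfilter ℕ).map f with hU
  have hle : ↑U ≤ Filter.principal (Set.Icc (-M) M) := by
    rw [le_principal_iff]
    refine mem_map.mpr (univ_mem' fun m => ?_)
    exact abs_le.mp (hb m)
  obtain ⟨a, -, ha⟩ := isCompact_Icc.ultrafilter_le_nhds U hle
  refine ⟨a, ?_⟩
  show Filter.map f ↑(Filter.hyperfilter ℕ) ≤ 𝓝 a
  rw [← Ultrafilter.coe_map]
  exact ha

lemma exists_bessel {E : Type} [NormedAddCommGroup E] [NormedSpace ℝ E]
    (J : L1 →L[ℝ] E) {c : ℝ} (hc0 : 0 < c) (hc : ∀ v, c * ‖v‖ ≤ ‖J v‖) :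
    ∃ h : ℕ → (E →L[ℝ] ℝ),
      (∀ k, h k (J (lp.single 1 k 1)) = 1) ∧
      (∀ (y : E) (t : Finset ℕ), ∑ k ∈ t, (h k y)^2 ≤ (‖y‖/c)^2) := by
  classical
  have key : ∀ (m : ℕ) (σ : Fin m → Bool), ∃ ψ : E →L[ℝ] ℝ, ‖ψ‖ ≤ 1/c ∧
      ∀ v : L1, ψ (J v) =
        ∑ j ∈ Finset.range m, (if h : j < m then (if σ ⟨j, h⟩ then (1:ℝ) else -1) else 0) * v j := by
    intro m σ
    refine exists_sign_functional J hc0 hc _ (fun j => ?_) m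
    by_cases h : j < m
    · simp only [dif_pos h]
      by_cases h2 : σ ⟨j, h⟩ <;> simp [h2]
    · simp [h]
  choose Ψ hΨnorm hΨval using key
  set χ' : ∀ m : ℕ, (Fin m → Bool) → ℕ → ℝ :=
    fun m σ k => if h : k < m then (if σ ⟨k, h⟩ then (1:ℝ) else -1) else 0 with hχ'
  set Hm : ℕ → ℕ → E → ℝ :=
    fun m k x => (2^m : ℝ)⁻¹ * ∑ σ : Fin m → Bool, χ' m σ k * Ψ m σ x with hHmdef
  have hχabs : ∀ m σ k, |χ' m σ k| ≤ 1 := by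
    intro m σ k
    by_cases h : k < m
    · simp only [hχ', dif_pos h]
      by_cases h2 : σ ⟨k, h⟩ <;> simp [h2]
    · simp [hχ', h]
  have hχzero : ∀ m σ k, ¬ k < m → χ' m σ k = 0 := by
    intro m σ k h; simp [hχ', h]
  have hΨabs : ∀ m σ (x : E), |Ψ m σ x| ≤ ‖x‖/c := by
    intro m σ x
    calc |Ψ m σ x| ≤ ‖Ψ m σ‖ * ‖x‖ := (Ψ m σ).le_opNorm x
      _ ≤ (1/c) * ‖x‖ := mul_le_mul_of_nonneg_right (hΨnorm m σ) (norm_nonneg _)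
      _ = ‖x‖/c := by ring
  have hcard : ∀ m : ℕ, (Fintype.card (Fin m → Bool) : ℝ) = 2^m := by
    intro m; simp [Fintype.card_fun]
  have F1 : ∀ m k (x : E), |Hm m k x| ≤ ‖x‖/c := by
    intro m k x
    have h1 : |∑ σ : Fin m → Bool, χ' m σ k * Ψ m σ x| ≤ (2^m : ℝ) * (‖x‖/c) := by
      calc |∑ σ : Fin m → Bool, χ' m σ k * Ψ m σ x|
          ≤ ∑ σ : Fin m → Bool, |χ' m σ k * Ψ m σ x| := Finset.abs_sum_le_sum_abs _ _
        _ ≤ ∑ _σ : Fin m → Bool, (‖x‖/c) := by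
            refine Finset.sum_le_sum fun σ _ => ?_
            rw [abs_mul]
            calc |χ' m σ k| * |Ψ m σ x| ≤ 1 * (‖x‖/c) :=
                  mul_le_mul (hχabs m σ k) (hΨabs m σ x) (abs_nonneg _) zero_le_one
              _ = ‖x‖/c := one_mul _
        _ = (2^m : ℝ) * (‖x‖/c) := by
            rw [Finset.sum_const, nsmul_eq_mul]
            congr 1
            exact_mod_cast hcard m
    have h2pos : (0:ℝ) < 2^m := by positivity
    rw [hHmdef]
    simp only [abs_mul, abs_inv, abs_pow]
    rw [abs_two]
    calc ((2:ℝ)^m)⁻¹ * |∑ σ : Fin m → Bool, χ' m σ k * Ψ m σ x|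
        ≤ ((2:ℝ)^m)⁻¹ * ((2^m : ℝ) * (‖x‖/c)) := by
          exact mul_le_mul_of_nonneg_left h1 (by positivity)
      _ = ‖x‖/c := by field_simp
  have hsingle : ∀ (k j : ℕ), ((lp.single 1 k (1:ℝ) : L1) : ∀ _ : ℕ, ℝ) j
      = if j = k then 1 else 0 := by
    intro k j
    by_cases h : j = k
    · subst h; rw [lp.single_apply_self]; simp
    · rw [lp.single_apply_ne _ _ _ h]; simp [h]
  have F2 : ∀ m k, k < m → Hm m k (J (lp.single 1 k 1)) = 1 := by
    intro m k hkm
    have hval : ∀ σ : Fin m → Bool, Ψ m σ (J (lp.single 1 k 1)) = χ' m σ k := by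
      intro σ
      rw [hΨval m σ]
      rw [Finset.sum_eq_single_of_mem k (Finset.mem_range.mpr hkm)]
      · rw [hsingle k k, if_pos rfl, mul_one]
      · intro j _ hjk
        rw [hsingle k j, if_neg hjk, mul_zero]
    have hsq : ∀ σ : Fin m → Bool, χ' m σ k * χ' m σ k = 1 := by
      intro σ
      simp only [hχ', dif_pos hkm]
      by_cases h2 : σ ⟨k, hkm⟩ <;> simp [h2]
    rw [hHmdef]
    simp only []
    rw [Finset.sum_congr rfl (fun σ _ => by rw [hval σ, hsq σ])]
    rw [Finset.sum_const, nsmul_eq_mul, mul_one]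
    have : ((Finset.univ : Finset (Fin m → Bool)).card : ℝ) = 2^m := by
      rw [Finset.card_univ]; exact_mod_cast hcard m
    rw [this]
    field_simp
  have F4 : ∀ m k (x : E), ¬ k < m → Hm m k x = 0 := by
    intro m k x h
    rw [hHmdef]
    simp only []
    rw [Finset.sum_congr rfl (fun σ _ => by rw [hχzero m σ k h, zero_mul])]
    simp
  have F3 : ∀ (x : E) (m : ℕ), ∑ k ∈ Finset.range m, (Hm m k x)^2 ≤ (‖x‖/c)^2 := by
    intro x m
    have hres : ∑ k ∈ Finset.range m, (Hm m k x)^2 = ∑ k : Fin m, (Hm m ↑k x)^2 :=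
      (Fin.sum_univ_eq_sum_range (fun k => (Hm m k x)^2) m).symm
    rw [hres]
    have hchi : ∀ (k : Fin m) (σ : Fin m → Bool), χ' m σ ↑k = (if σ k then (1:ℝ) else -1) := by
      intro k σ
      simp only [hχ', dif_pos k.isLt, Fin.eta]
    have hb := bessel_finite (fun σ => Ψ m σ x)
    have hlhs : ∑ k : Fin m, (Hm m ↑k x)^2
        = ∑ k : Fin m, ((2^m : ℝ)⁻¹ * ∑ σ : Fin m → Bool, (if σ k then (1:ℝ) else -1) * Ψ m σ x)^2 := by
      refine Finset.sum_congr rfl fun k _ => ?_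
      rw [hHmdef]
      simp only []
      congr 1
      congr 1
      exact Finset.sum_congr rfl fun σ _ => by rw [hchi k σ]
    rw [hlhs]
    refine le_trans hb ?_
    have hsum : ∑ σ : Fin m → Bool, (Ψ m σ x)^2 ≤ (2^m : ℝ) * (‖x‖/c)^2 := by
      calc ∑ σ : Fin m → Bool, (Ψ m σ x)^2 ≤ ∑ _σ : Fin m → Bool, (‖x‖/c)^2 := by
            refine Finset.sum_le_sum fun σ _ => ?_
            calc (Ψ m σ x)^2 = |Ψ m σ x|^2 := (sq_abs _).symm
              _ ≤ (‖x‖/c)^2 := pow_le_pow_left₀ (abs_nonneg _) (hΨabs m σ x) 2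
        _ = (2^m : ℝ) * (‖x‖/c)^2 := by
            rw [Finset.sum_const, nsmul_eq_mul]
            congr 1
            exact_mod_cast hcard m
    calc (2^m : ℝ)⁻¹ * ∑ σ : Fin m → Bool, (Ψ m σ x)^2
        ≤ (2^m : ℝ)⁻¹ * ((2^m : ℝ) * (‖x‖/c)^2) :=
          mul_le_mul_of_nonneg_left hsum (by positivity)
      _ = (‖x‖/c)^2 := by field_simp
  have F5a : ∀ m k (x y : E), Hm m k (x + y) = Hm m k x + Hm m k y := by
    intro m k x y
    rw [hHmdef]
    simp only [map_add, mul_add, Finset.sum_add_distrib]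
  have F5s : ∀ m k (r : ℝ) (x : E), Hm m k (r • x) = r * Hm m k x := by
    intro m k r x
    rw [hHmdef]
    simp only [map_smul, smul_eq_mul, Finset.mul_sum]
    exact Finset.sum_congr rfl fun σ _ => by ring
  -- ultrafilter limits
  have hlim : ∀ k (x : E), ∃ l, Tendsto (fun m => Hm m k x)
      (Filter.hyperfilter ℕ : Filter ℕ) (𝓝 l) :=
    fun k x => exists_ulim _ (‖x‖/c) (fun m => F1 m k x)
  choose L hL using hlim
  have hNB : (Filter.hyperfilter ℕ : Filter ℕ).NeBot := Ultrafilter.neBot _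
  have Ladd : ∀ k (x y : E), L k (x + y) = L k x + L k y := by
    intro k x y
    refine tendsto_nhds_unique (hL k (x+y)) ?_
    have := (hL k x).add (hL k y)
    refine this.congr fun m => (F5a m k x y).symm
  have Lsmul : ∀ k (r : ℝ) (x : E), L k (r • x) = r * L k x := by
    intro k r x
    refine tendsto_nhds_unique (hL k (r • x)) ?_
    have := (hL k x).const_mul r
    refine this.congr fun m => (F5s m k r x).symm
  have Lbound : ∀ k (x : E), ‖L k x‖ ≤ (1/c) * ‖x‖ := by
    intro k x
    rw [Real.norm_eq_abs]
    have habs : Tendsto (fun m => |Hm m k x|) (Filter.hyperfilter ℕ : Filter ℕ) (𝓝 |L k x|) :=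
      (hL k x).abs
    have hle := le_of_tendsto habs (Eventually.of_forall (fun m => F1 m k x))
    calc |L k x| ≤ ‖x‖/c := hle
      _ = (1/c) * ‖x‖ := by ring
  set hk : ℕ → E →L[ℝ] ℝ := fun k =>
    LinearMap.mkContinuous
      { toFun := L k
        map_add' := Ladd k
        map_smul' := fun r x => by simp [Lsmul k r x] } (1/c) (Lbound k) with hhk
  have hkval : ∀ k (x : E), hk k x = L k x := fun k x => rfl
  refine ⟨hk, ?_, ?_⟩
  · intro k
    rw [hkval]
    refine tendsto_nhds_unique (hL k (J (lp.single 1 k 1))) ?_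
    have hev' : ∀ᶠ m in (Filter.hyperfilter ℕ : Filter ℕ), k < m :=
      Nat.hyperfilter_le_atTop (eventually_gt_atTop k)
    have hev : ∀ᶠ m in (Filter.hyperfilter ℕ : Filter ℕ), Hm m k (J (lp.single 1 k 1)) = 1 :=
      hev'.mono (fun m hm => F2 m k hm)
    exact tendsto_const_nhds.congr' (hev.mono fun m hm => hm.symm)
  · intro y t
    have hperm : ∀ m, ∑ k ∈ t, (Hm m k y)^2 ≤ (‖y‖/c)^2 := by
      intro m
      have hfilter : ∑ k ∈ t.filter (· < m), (Hm m k y)^2 = ∑ k ∈ t, (Hm m k y)^2 := by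
        refine Finset.sum_filter_of_ne fun k _ hne => ?_
        by_contra h
        exact hne (by rw [F4 m k y h]; ring)
      rw [← hfilter]
      have hsub : t.filter (· < m) ⊆ Finset.range m := by
        intro k hk2
        rw [Finset.mem_range]
        exact (Finset.mem_filter.mp hk2).2
      calc ∑ k ∈ t.filter (· < m), (Hm m k y)^2
          ≤ ∑ k ∈ Finset.range m, (Hm m k y)^2 :=
            Finset.sum_le_sum_of_subset_of_nonneg hsub (fun k _ _ => sq_nonneg _)
        _ ≤ (‖y‖/c)^2 := F3 y m
    have hlimsum : Tendsto (fun m => ∑ k ∈ t, (Hm m k y)^2)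
        (Filter.hyperfilter ℕ : Filter ℕ) (𝓝 (∑ k ∈ t, (L k y)^2)) := by
      refine tendsto_finset_sum _ fun k _ => ?_
      exact (hL k y).pow 2
    have := le_of_tendsto hlimsum (Eventually.of_forall hperm)
    simpa [hkval] using this


noncomputable abbrev H2 := lp (fun _ : ℕ => ℝ) 2

lemma exists_bilinear_op {E : Type} [NormedAddCommGroup E] [NormedSpace ℝ E]
    (f h : ℕ → (E →L[ℝ] ℝ)) (hf : ∀ k, ‖f k‖ ≤ 1) {C : ℝ} (hC0 : 0 ≤ C)
    (hbes : ∀ (y : E) (t : Finset ℕ), ∑ k ∈ t, (h k y)^2 ≤ (C * ‖y‖)^2) :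
    ∃ B : E →L[ℝ] E →L[ℝ] H2, ∀ (x y : E) (k : ℕ), (B x y) k = f k x * h k y := by
  classical
  have htoReal : ((2:ℝ≥0∞)).toReal = 2 := by norm_num
  have hsumbound : ∀ (x y : E) (t : Finset ℕ),
      ∑ k ∈ t, ‖f k x * h k y‖ ^ ((2:ℝ≥0∞)).toReal ≤ (C * ‖x‖ * ‖y‖)^2 := by
    intro x y t
    have heq : ∀ k, ‖f k x * h k y‖ ^ ((2:ℝ≥0∞)).toReal = (f k x)^2 * (h k y)^2 := by
      intro k
      rw [htoReal]
      rw [show ((2:ℝ)) = ((2:ℕ):ℝ) by norm_num, Real.rpow_natCast]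
      rw [Real.norm_eq_abs, abs_mul, mul_pow, sq_abs, sq_abs]
    rw [Finset.sum_congr rfl (fun k _ => heq k)]
    have hfk : ∀ k, (f k x)^2 ≤ ‖x‖^2 := by
      intro k
      have h1 : |f k x| ≤ ‖x‖ := by
        calc |f k x| ≤ ‖f k‖ * ‖x‖ := (f k).le_opNorm x
          _ ≤ 1 * ‖x‖ := mul_le_mul_of_nonneg_right (hf k) (norm_nonneg _)
          _ = ‖x‖ := one_mul _
      calc (f k x)^2 = |f k x|^2 := (sq_abs _).symm
        _ ≤ ‖x‖^2 := pow_le_pow_left₀ (abs_nonneg _) h1 2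
    calc ∑ k ∈ t, (f k x)^2 * (h k y)^2 ≤ ∑ k ∈ t, ‖x‖^2 * (h k y)^2 := by
          refine Finset.sum_le_sum fun k _ => ?_
          exact mul_le_mul_of_nonneg_right (hfk k) (sq_nonneg _)
      _ = ‖x‖^2 * ∑ k ∈ t, (h k y)^2 := by rw [Finset.mul_sum]
      _ ≤ ‖x‖^2 * (C * ‖y‖)^2 := mul_le_mul_of_nonneg_left (hbes y t) (sq_nonneg _)
      _ = (C * ‖x‖ * ‖y‖)^2 := by ring
  have hmem : ∀ (x y : E), Memℓp (fun k => f k x * h k y) 2 := by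
    intro x y
    exact memℓp_gen' (hsumbound x y)
  set Bfun : E → E → H2 := fun x y => ⟨fun k => f k x * h k y, hmem x y⟩ with hBfun
  have happly : ∀ (x y : E) (k : ℕ), (Bfun x y : ∀ _ : ℕ, ℝ) k = f k x * h k y := fun x y k => rfl
  have hnormB : ∀ x y, ‖Bfun x y‖ ≤ C * ‖x‖ * ‖y‖ := by
    intro x y
    refine lp.norm_le_of_forall_sum_le (by norm_num) (by positivity) ?_
    intro s
    have h1 := hsumbound x y s
    calc ∑ k ∈ s, ‖(Bfun x y : ∀ _ : ℕ, ℝ) k‖ ^ ((2:ℝ≥0∞)).toReal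
        = ∑ k ∈ s, ‖f k x * h k y‖ ^ ((2:ℝ≥0∞)).toReal := by
          refine Finset.sum_congr rfl fun k _ => by rw [happly]
      _ ≤ (C * ‖x‖ * ‖y‖)^2 := h1
      _ = (C * ‖x‖ * ‖y‖) ^ ((2:ℝ≥0∞)).toReal := by
          rw [htoReal, show ((2:ℝ)) = ((2:ℕ):ℝ) by norm_num, Real.rpow_natCast]
  have hext : ∀ (u v : H2), (∀ k, (u : ∀ _ : ℕ, ℝ) k = (v : ∀ _ : ℕ, ℝ) k) → u = v := by
    intro u v huv
    apply Subtype.ext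
    funext k
    exact huv k
  set Blin : E →ₗ[ℝ] E →ₗ[ℝ] H2 :=
    { toFun := fun x =>
        { toFun := Bfun x
          map_add' := by
            intro y y'
            refine hext _ _ fun k => ?_
            rw [happly]
            have : ((Bfun x y + Bfun x y' : H2) : ∀ _ : ℕ, ℝ) k
                = (Bfun x y : ∀ _ : ℕ, ℝ) k + (Bfun x y' : ∀ _ : ℕ, ℝ) k := by
              rw [lp.coeFn_add]; rfl
            rw [this, happly, happly, map_add, mul_add]
          map_smul' := by
            intro r y
            refine hext _ _ fun k => ?_
            rw [happly]
            have : ((r • Bfun x y : H2) : ∀ _ : ℕ, ℝ) k = r * (Bfun x y : ∀ _ : ℕ, ℝ) k := by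
              rw [lp.coeFn_smul]; rfl
            simp only [RingHom.id_apply]
            rw [this, happly, map_smul]
            simp only [smul_eq_mul]
            ring }
      map_add' := by
        intro x x'
        apply LinearMap.ext
        intro y
        refine hext _ _ fun k => ?_
        show (Bfun (x + x') y : ∀ _ : ℕ, ℝ) k = ((Bfun x y + Bfun x' y : H2) : ∀ _ : ℕ, ℝ) k
        have : ((Bfun x y + Bfun x' y : H2) : ∀ _ : ℕ, ℝ) k
            = (Bfun x y : ∀ _ : ℕ, ℝ) k + (Bfun x' y : ∀ _ : ℕ, ℝ) k := by
          rw [lp.coeFn_add]; rfl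
        rw [this, happly, happly, happly, map_add, add_mul]
      map_smul' := by
        intro r x
        apply LinearMap.ext
        intro y
        refine hext _ _ fun k => ?_
        show (Bfun (r • x) y : ∀ _ : ℕ, ℝ) k = ((r • Bfun x y : H2) : ∀ _ : ℕ, ℝ) k
        have : ((r • Bfun x y : H2) : ∀ _ : ℕ, ℝ) k = r * (Bfun x y : ∀ _ : ℕ, ℝ) k := by
          rw [lp.coeFn_smul]; rfl
        rw [this, happly, happly, map_smul]
        simp only [smul_eq_mul]
        ring } with hBlin
  refine ⟨LinearMap.mkContinuous₂ Blin C (fun x y => hnormB x y), ?_⟩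
  intro x y k
  rfl

lemma weaklyCompactOp_into_l2 {X : Type} [NormedAddCommGroup X] [NormedSpace ℝ X]
    (T : X →L[ℝ] H2) : WeaklyCompactOp T := by
  classical
  set td := InnerProductSpace.toDual ℝ H2 with htd
  set ι : WeakDual ℝ H2 → WeakSpace ℝ H2 := fun ψ => toWeakSpace ℝ H2 (td.symm ψ) with hι
  have ιcont : Continuous ι := by
    apply WeakBilin.continuous_of_continuous_eval
    intro φ
    have key : ∀ ψ : WeakDual ℝ H2, φ (td.symm ψ) = ψ (td.symm φ) := by
      intro ψ
      have h1 : φ = td (td.symm φ) := (td.apply_symm_apply φ).symm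
      have h2 : ψ = td (td.symm ψ) := (td.apply_symm_apply ψ).symm
      calc φ (td.symm ψ) = td (td.symm φ) (td.symm ψ) := by rw [← h1]
        _ = ⟪td.symm φ, td.symm ψ⟫ := InnerProductSpace.toDual_apply_apply
        _ = ⟪td.symm ψ, td.symm φ⟫ := real_inner_comm _ _
        _ = td (td.symm ψ) (td.symm φ) := InnerProductSpace.toDual_apply_apply.symm
        _ = ψ (td.symm φ) := by rw [← h2]; rfl
    have : (fun ψ : WeakDual ℝ H2 => ((topDualPairing ℝ H2).flip) (ι ψ) φ)
        = fun ψ : WeakDual ℝ H2 => (topDualPairing ℝ H2) ψ (td.symm φ) := by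
      funext ψ
      show φ (td.symm ψ) = ψ (td.symm φ)
      exact key ψ
    rw [this]
    exact WeakBilin.eval_continuous (topDualPairing ℝ H2) (td.symm φ)
  have hDcomp := WeakDual.isCompact_closedBall (𝕜 := ℝ) (E := H2) 0 ‖T‖
  set D : Set (WeakDual ℝ H2) :=
    WeakDual.toStrongDual ⁻¹' Metric.closedBall (0 : StrongDual ℝ H2) ‖T‖ with hD
  have hcomp : IsCompact (ι '' D) := hDcomp.image ιcont
  haveI : T2Space (WeakSpace ℝ H2) := by
    have hinj : Function.Injective ((topDualPairing ℝ H2).flip) := by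
      intro u v huv
      rw [NormedSpace.eq_iff_forall_dual_eq (𝕜 := ℝ)]
      intro g
      exact DFunLike.congr_fun huv g
    exact (WeakBilin.isEmbedding hinj).t2Space
  have hclosed : IsClosed (ι '' D) := hcomp.isClosed
  have hsub : toWeakSpace ℝ H2 '' (T '' closedBall (0 : X) 1) ⊆ ι '' D := by
    rintro - ⟨-, ⟨x, hx, rfl⟩, rfl⟩
    refine ⟨td (T x), ?_, ?_⟩
    · rw [hD]
      show dist (WeakDual.toStrongDual (td (T x))) 0 ≤ ‖T‖
      rw [dist_zero_right]
      have h1 : ‖WeakDual.toStrongDual (td (T x))‖ = ‖td (T x)‖ := rfl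
      rw [h1, td.norm_map]
      calc ‖T x‖ ≤ ‖T‖ * ‖x‖ := T.le_opNorm x
        _ ≤ ‖T‖ * 1 := mul_le_mul_of_nonneg_left (mem_closedBall_zero_iff.mp hx) (norm_nonneg T)
        _ = ‖T‖ := mul_one _
    · rw [hι]
      simp only []
      rw [td.symm_apply_apply]
  refine IsCompact.of_isClosed_subset hcomp isClosed_closure ?_
  exact closure_minimal hsub hclosed
end Aux

/-- if every operator `E → E*` is completely continuous, `E` is not Schur and
`E` contains an isomorphic copy of `ℓ¹`, then `E ⊗̂ E` fails the Dunford–Pettis property. -/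
theorem not_dunfordPettis_tensor_self
    (E : Type) [NormedAddCommGroup E] [NormedSpace ℝ E] [CompleteSpace E]
    (h₁ : ∀ T : E →L[ℝ] (E →L[ℝ] ℝ), CompletelyContinuous T)
    (h₂ : ¬ SchurProperty E)
    (h₃ : ∃ J : lp (fun _ : ℕ => ℝ) 1 →L[ℝ] E, ∃ c > (0 : ℝ), ∀ x, c * ‖x‖ ≤ ‖J x‖)
    (X : Type) [NormedAddCommGroup X] [NormedSpace ℝ X] [CompleteSpace X]
    (tmul : E →L[ℝ] E →L[ℝ] X) (hX : IsProjectiveTensorProduct E E X tmul) :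
    ¬ DunfordPettis X := by
  classical
  intro hDP
  rw [SchurProperty] at h₂
  push_neg at h₂
  obtain ⟨x, hxw, hxn⟩ := h₂
  -- extract ε and a subsequence with norms bounded below
  have hfreq : ∃ ε > (0:ℝ), ∃ᶠ n in atTop, ε ≤ ‖x n‖ := by
    rw [Metric.tendsto_atTop] at hxn
    push_neg at hxn
    obtain ⟨ε, hε0, hfm⟩ := hxn
    refine ⟨ε, hε0, ?_⟩
    rw [frequently_atTop]
    intro N
    obtain ⟨n, hnN, hd⟩ := hfm N
    refine ⟨n, hnN, ?_⟩
    rw [Real.dist_eq, sub_zero, abs_of_nonneg (norm_nonneg _)] at hd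
    exact hd
  obtain ⟨ε, hε0, hfr⟩ := hfreq
  obtain ⟨φ, hφmono, hφ⟩ := Filter.extraction_of_frequently_atTop hfr
  set a : ℕ → E := fun n => x (φ n) with ha
  have haw : WeaklyNull a := fun ψ => (hxw ψ).comp hφmono.tendsto_atTop
  have hanorm : ∀ n, ε ≤ ‖a n‖ := hφ
  have hane : ∀ n, a n ≠ 0 := by
    intro n hcon
    have := hanorm n
    rw [hcon, norm_zero] at this
    linarith
  -- norming functionals
  have hdual : ∀ n, ∃ g : E →L[ℝ] ℝ, ‖g‖ = 1 ∧ g (a n) = ‖a n‖ := by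
    intro n
    obtain ⟨g, hg1, hg2⟩ := exists_dual_vector ℝ (a n) (norm_ne_zero_iff.mpr (hane n))
    exact ⟨g, hg1, by exact_mod_cast hg2⟩
  choose f hf1 hf2 using hdual
  -- the ℓ¹ copy and the Bessel system
  obtain ⟨J, c, hc0, hc⟩ := h₃
  obtain ⟨h, hh1, hh2⟩ := exists_bessel J hc0 hc
  have hbes' : ∀ (y : E) (t : Finset ℕ), ∑ k ∈ t, (h k y)^2 ≤ ((1/c) * ‖y‖)^2 := by
    intro y t
    have h1 := hh2 y t
    have h2 : (‖y‖/c)^2 = ((1/c) * ‖y‖)^2 := by ring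
    linarith
  obtain ⟨B, hB⟩ := exists_bilinear_op f h (fun k => le_of_eq (hf1 k)) (by positivity) hbes'
  obtain ⟨T, ⟨hT, -⟩, -⟩ := hX.lift H2 B
  have hcc := hDP H2 T (weaklyCompactOp_into_l2 T)
  -- the weakly null sequence in X
  set e : ℕ → lp (fun _ : ℕ => ℝ) 1 := fun n => lp.single 1 n 1 with he
  have hen : ∀ n, ‖e n‖ = 1 := by
    intro n
    have := lp.norm_single (E := fun _ : ℕ => ℝ) (p := 1) (by norm_num) n (1:ℝ)
    simpa [he] using this
  set z : ℕ → X := fun n => tmul (a n) (J (e n)) with hz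
  have hzw : WeaklyNull z := by
    intro ψ
    set S : E →L[ℝ] (E →L[ℝ] ℝ) := ((ContinuousLinearMap.compL ℝ E X ℝ) ψ).comp tmul with hS
    have hSval : ∀ (u v : E), S u v = ψ (tmul u v) := fun u v => rfl
    have hccS := h₁ S a haw
    have hbound : ∀ n, ‖ψ (z n)‖ ≤ ‖S (a n)‖ * ‖J‖ := by
      intro n
      have h1 : ψ (z n) = S (a n) (J (e n)) := (hSval (a n) (J (e n))).symm
      rw [h1]
      calc ‖S (a n) (J (e n))‖ ≤ ‖S (a n)‖ * ‖J (e n)‖ := (S (a n)).le_opNorm _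
        _ ≤ ‖S (a n)‖ * (‖J‖ * ‖e n‖) :=
            mul_le_mul_of_nonneg_left (J.le_opNorm _) (norm_nonneg _)
        _ = ‖S (a n)‖ * ‖J‖ := by rw [hen n, mul_one]
    have hg : Tendsto (fun n => ‖S (a n)‖ * ‖J‖) atTop (𝓝 0) := by
      have := hccS.mul_const ‖J‖
      simpa using this
    exact squeeze_zero_norm hbound hg
  -- T is not completely continuous on z
  have hTz : ∀ n, ε ≤ ‖T (z n)‖ := by
    intro n
    have h1 : T (z n) = B (a n) (J (e n)) := hT (a n) (J (e n))
    have h2 : (T (z n) : ∀ _ : ℕ, ℝ) n = f n (a n) * h n (J (e n)) := by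
      rw [h1]; exact hB (a n) (J (e n)) n
    have h3 : (T (z n) : ∀ _ : ℕ, ℝ) n = ‖a n‖ := by
      rw [h2, hf2 n, he]
      simp only []
      rw [hh1 n, mul_one]
    calc ε ≤ ‖a n‖ := hanorm n
      _ = ‖(T (z n) : ∀ _ : ℕ, ℝ) n‖ := by
          rw [h3, Real.norm_eq_abs, abs_of_nonneg (norm_nonneg _)]
      _ ≤ ‖T (z n)‖ := lp.norm_apply_le_norm (by norm_num) (T (z n)) n
  have hlim := hcc z hzw
  have hfin : ε ≤ 0 := ge_of_tendsto hlim (Eventually.of_forall hTz)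
  linarith
end
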